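/- arXiv:2408.05561 — 5 statements merged into one kernel-verified Lean document; each statement's English description precedes it below -/
import Mathlib

section
/- Let K be a field, R = K[x_1,…,x_n], I ⊆ R a monomial ideal, t a positive integer, 𝔭 a prime monomial ideal of R, and let y_1,…,y_s be distinct variables of R such that for each i = 1,…,s the ideal 𝔭\y_i (generated by the variables of 𝔭 other than y_i) is not an associated prime of R/(I\y_i)^t, where I\y_i denotes the deletion of y_i from I. Then 𝔭 ∈ Ass(R/I^t) if and only if 𝔭 ∈ Ass(R/(I^t :_R ∏_{i=1}^s y_i)). -/
/-!
Write `J = I^t` and `m_k = y_1 ⋯ y_k`, and induct on `k`. If `𝔭 = (J : m_{k-1}) : g` is prime,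
then either `𝔭 = ((J : m_{k-1}) : y_k) : g'` for some `g'`, or `𝔭 = ((J : m_{k-1}) + (y_k)) : g`;
this dichotomy holds for any prime colon ideal in a commutative ring. In the second case all ideals
are monomial, so `g` may be taken to be a monomial `x^e` not involving `y_k`, and then
`𝔭 \ y_k = (J \ y_k) : x^e m_{k-1}` is associated to `R/(J \ y_k) = R/(I \ y_k)^t`, which the
hypothesis excludes. Conversely `Ass(R/(J : f)) ⊆ Ass(R/J)` for all `f`, as `(J : f) : g = J : fg`.
-/

open MvPolynomial

/-- Deletion of the variable `x i` from a monomial ideal: set `x i = 0` in every generator. -/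
noncomputable def deleteVar {K : Type*} [Field K] {n : ℕ} (i : Fin n)
    (I : Ideal (MvPolynomial (Fin n) K)) : Ideal (MvPolynomial (Fin n) K) :=
  I.map (aeval fun j => if j = i then (0 : MvPolynomial (Fin n) K) else X j).toRingHom

theorem Ideal.mem_colon_singleton {R : Type*} [CommSemiring R] {J : Ideal R} {r g : R} :
    r ∈ J.colon {g} ↔ r * g ∈ J :=
  Submodule.mem_colon_singleton

section AssociatedPrimes

variable {R : Type*} [CommRing R]

theorem Ideal.colon_singleton_one (J : Ideal R) : J.colon {1} = J := by
  ext r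
  rw [Ideal.mem_colon_singleton, mul_one]

theorem Ideal.colon_singleton_colon_singleton (J : Ideal R) (a b : R) :
    (J.colon {a}).colon {b} = J.colon {a * b} := by
  ext r
  rw [Ideal.mem_colon_singleton, Ideal.mem_colon_singleton, Ideal.mem_colon_singleton,
    mul_assoc, mul_comm b a]

variable [IsNoetherianRing R] {J p : Ideal R}

theorem mem_associatedPrimes_quotient_iff :
    p ∈ associatedPrimes R (R ⧸ J) ↔ p.IsPrime ∧ ∃ g : R, p = J.colon {g} := by
  have hcolon (g : R) :
      (⊥ : Submodule R (R ⧸ J)).colon {Ideal.Quotient.mk J g} = J.colon {g} := by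
    ext r
    simp [Submodule.mem_colon_singleton, ← Ideal.Quotient.mk_eq_mk, ← Submodule.Quotient.mk_smul,
      Submodule.Quotient.mk_eq_zero]
  rw [AssociatedPrimes.mem_iff, isAssociatedPrime_iff, Ideal.Quotient.mk_surjective.exists]
  simp only [hcolon]

theorem associatedPrimes_quotient_colon_subset (a : R) :
    associatedPrimes R (R ⧸ J.colon {a}) ⊆ associatedPrimes R (R ⧸ J) := by
  intro p hp
  rw [mem_associatedPrimes_quotient_iff] at hp ⊢
  obtain ⟨hprime, g, rfl⟩ := hp
  exact ⟨hprime, a * g, Ideal.colon_singleton_colon_singleton J a g⟩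

theorem mem_associatedPrimes_colon_or_sup (hp : p ∈ associatedPrimes R (R ⧸ J)) (v : R) :
    p ∈ associatedPrimes R (R ⧸ J.colon {v}) ∨
      p ∈ associatedPrimes R (R ⧸ (J ⊔ Ideal.span {v})) := by
  simp only [mem_associatedPrimes_quotient_iff] at hp ⊢
  obtain ⟨hprime, g, rfl⟩ := hp
  by_cases hg : (J ⊔ Ideal.span {v}).colon {g} ≤ J.colon {g}
  · exact .inr ⟨hprime, g, le_antisymm (Submodule.colon_mono le_sup_left le_rfl) hg⟩
  obtain ⟨r₀, hr₀, hr₀J⟩ := SetLike.not_le_iff_exists.1 hg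
  obtain ⟨u, hu, _, hw, huw⟩ := Submodule.mem_sup.1 (Ideal.mem_colon_singleton.1 hr₀)
  obtain ⟨b, rfl⟩ := Ideal.mem_span_singleton'.1 hw
  -- `r₀ ∉ J : g` and `r₀ g ≡ b v` modulo `J`, so `J : g = J : v b` by primality
  refine .inl ⟨hprime, b, ?_⟩
  ext r
  rw [Ideal.colon_singleton_colon_singleton, Ideal.mem_colon_singleton,
    Ideal.mem_colon_singleton]
  constructor
  · intro hr
    rw [show r * (v * b) = r₀ * (r * g) - r * u by linear_combination r * huw]
    exact J.sub_mem (J.mul_mem_left _ hr) (J.mul_mem_left _ hu)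
  · intro hr
    have hrr₀ : r * r₀ ∈ J.colon {g} := by
      rw [Ideal.mem_colon_singleton,
        show r * r₀ * g = r * (v * b) + r * u by linear_combination -r * huw]
      exact J.add_mem hr (J.mul_mem_left _ hu)
    exact Ideal.mem_colon_singleton.1 ((hprime.mem_or_mem hrr₀).resolve_right hr₀J)

theorem mem_associatedPrimes_quotient_colon_prod {ι : Type*} [DecidableEq ι]
    (hp : p ∈ associatedPrimes R (R ⧸ J)) (s : Finset ι) (v : ι → R)
    (hs : ∀ i ∈ s, ∀ u ⊆ s.erase i,
      p ∉ associatedPrimes R (R ⧸ (J.colon {∏ j ∈ u, v j} ⊔ Ideal.span {v i}))) :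
    p ∈ associatedPrimes R (R ⧸ J.colon {∏ i ∈ s, v i}) := by
  induction s using Finset.induction_on with
  | empty => rwa [Finset.prod_empty, Ideal.colon_singleton_one]
  | insert a s ha ih =>
    have hp' := ih fun i hi u hu => hs i (Finset.mem_insert_of_mem hi) u
      (hu.trans (Finset.erase_subset_erase _ (Finset.subset_insert _ _)))
    rcases mem_associatedPrimes_colon_or_sup hp' (v a) with h | h
    · rwa [Finset.prod_insert ha, mul_comm, ← Ideal.colon_singleton_colon_singleton]
    · exact absurd h (hs a (Finset.mem_insert_self a s) s (by rw [Finset.erase_insert ha]))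

end AssociatedPrimes

section MonomialIdeal

variable {σ R : Type*} [CommSemiring R]

def IsMonomialIdeal (J : Ideal (MvPolynomial σ R)) : Prop :=
  ∃ T : Set (σ →₀ ℕ), J = Ideal.span ((fun d => monomial d (1 : R)) '' T)

theorem Ideal.mem_of_forall_monomial_mem {J : Ideal (MvPolynomial σ R)} {f : MvPolynomial σ R}
    (h : ∀ c ∈ f.support, monomial c 1 ∈ J) : f ∈ J := by
  rw [← support_sum_monomial_coeff f]
  refine J.sum_mem fun c hc => ?_
  rw [← mul_one (coeff c f), ← C_mul_monomial]
  exact J.mul_mem_left _ (h c hc)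

theorem monomial_mem_span_monomial_iff [Nontrivial R] {T : Set (σ →₀ ℕ)} {c : σ →₀ ℕ} :
    monomial c (1 : R) ∈ Ideal.span ((fun d => monomial d (1 : R)) '' T) ↔ ∃ d ∈ T, d ≤ c := by
  classical
  rw [mem_ideal_span_monomial_image, support_monomial, if_neg one_ne_zero]
  simp

theorem monomial_mem_span_X_iff [Nontrivial R] {B : Set σ} {c : σ →₀ ℕ} :
    monomial c (1 : R) ∈ Ideal.span (X '' B) ↔ ∃ j ∈ B, c j ≠ 0 := by
  classical
  rw [mem_ideal_span_X_image, support_monomial, if_neg one_ne_zero]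
  simp

theorem isMonomialIdeal_iff {J : Ideal (MvPolynomial σ R)} :
    IsMonomialIdeal J ↔ ∀ f ∈ J, ∀ c ∈ f.support, monomial c 1 ∈ J := by
  constructor
  · rintro ⟨T, rfl⟩ f hf c hc
    obtain ⟨d, hd, hdc⟩ := mem_ideal_span_monomial_image.1 hf c hc
    rw [show monomial c (1 : R) = monomial (c - d) 1 * monomial d 1 by
      rw [monomial_mul, mul_one, tsub_add_cancel_of_le hdc]]
    exact Ideal.mul_mem_left _ _ (Ideal.subset_span ⟨d, hd, rfl⟩)
  · intro h
    refine ⟨{c | monomial c 1 ∈ J}, le_antisymm (fun f hf => ?_) ?_⟩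
    · exact Ideal.mem_of_forall_monomial_mem fun c hc => Ideal.subset_span ⟨c, h f hf c hc, rfl⟩
    · rw [Ideal.span_le]
      rintro _ ⟨c, hc, rfl⟩
      exact hc

theorem isMonomialIdeal_span_X (B : Set σ) :
    IsMonomialIdeal (Ideal.span (X '' B : Set (MvPolynomial σ R))) :=
  ⟨(fun j => Finsupp.single j 1) '' B, by rw [Set.image_image]; rfl⟩

namespace IsMonomialIdeal

variable {I J : Ideal (MvPolynomial σ R)}

theorem mem_iff (hJ : IsMonomialIdeal J) {f : MvPolynomial σ R} :
    f ∈ J ↔ ∀ c ∈ f.support, monomial c 1 ∈ J :=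
  ⟨isMonomialIdeal_iff.1 hJ f, Ideal.mem_of_forall_monomial_mem⟩

theorem ext (hI : IsMonomialIdeal I) (hJ : IsMonomialIdeal J)
    (h : ∀ c, monomial c (1 : R) ∈ I ↔ monomial c 1 ∈ J) : I = J := by
  ext f
  rw [hI.mem_iff, hJ.mem_iff]
  simp only [h]

theorem sup (hI : IsMonomialIdeal I) (hJ : IsMonomialIdeal J) : IsMonomialIdeal (I ⊔ J) := by
  obtain ⟨T, rfl⟩ := hI
  obtain ⟨T', rfl⟩ := hJ
  exact ⟨T ∪ T', by rw [Set.image_union, Ideal.span_union]⟩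

open scoped Pointwise in
theorem mul (hI : IsMonomialIdeal I) (hJ : IsMonomialIdeal J) : IsMonomialIdeal (I * J) := by
  obtain ⟨T, rfl⟩ := hI
  obtain ⟨T', rfl⟩ := hJ
  refine ⟨T + T', ?_⟩
  rw [Ideal.span_mul_span', ← Set.image2_mul, Set.image2_image_left, Set.image2_image_right,
    ← Set.image2_add, Set.image_image2]
  simp only [monomial_mul, mul_one]

theorem pow (hJ : IsMonomialIdeal J) (t : ℕ) : IsMonomialIdeal (J ^ t) := by
  induction t with
  | zero => exact ⟨{0}, by simp [Ideal.one_eq_top]⟩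
  | succ t ih => rw [pow_succ]; exact ih.mul hJ

theorem colon_monomial (hJ : IsMonomialIdeal J) (m : σ →₀ ℕ) :
    IsMonomialIdeal (J.colon {monomial m (1 : R)}) := by
  refine isMonomialIdeal_iff.2 fun f hf c hc => ?_
  rw [Ideal.mem_colon_singleton] at hf ⊢
  rw [monomial_mul, one_mul]
  refine hJ.mem_iff.1 hf _ ?_
  rwa [mem_support_iff, coeff_mul_monomial, mul_one, ← mem_support_iff]

theorem monomial_mem_sup_iff [Nontrivial R] (hI : IsMonomialIdeal I) (hJ : IsMonomialIdeal J)
    {c : σ →₀ ℕ} : monomial c (1 : R) ∈ I ⊔ J ↔ monomial c 1 ∈ I ∨ monomial c 1 ∈ J := by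
  classical
  refine ⟨fun h => ?_, fun h => h.elim Ideal.mem_sup_left Ideal.mem_sup_right⟩
  obtain ⟨a, ha, b, hb, hab⟩ := Submodule.mem_sup.1 h
  have hc : c ∈ (a + b).support := by simp [hab, coeff_monomial]
  rcases Finset.mem_union.1 (support_add hc) with hc | hc
  · exact .inl (hI.mem_iff.1 ha c hc)
  · exact .inr (hJ.mem_iff.1 hb c hc)

theorem exists_monomial_colon_eq (hJ : IsMonomialIdeal J) {p : Ideal (MvPolynomial σ R)}
    (hpm : IsMonomialIdeal p) (hp : p.IsPrime) {g : MvPolynomial σ R} (hpg : p = J.colon {g}) :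
    ∃ e, p = J.colon {monomial e 1} := by
  have hle (c) (hc : c ∈ g.support) : p ≤ J.colon {monomial c 1} := by
    obtain ⟨T, hT⟩ := hpm
    rw [hT, Ideal.span_le]
    rintro _ ⟨a, ha, rfl⟩
    have hag : g * monomial a 1 ∈ J := by
      rw [mul_comm, ← Ideal.mem_colon_singleton, ← hpg, hT]
      exact Ideal.subset_span ⟨a, ha, rfl⟩
    rw [SetLike.mem_coe, Ideal.mem_colon_singleton, monomial_mul, mul_one, add_comm]
    refine hJ.mem_iff.1 hag _ ?_
    rwa [mem_support_iff, coeff_mul_monomial, mul_one, ← mem_support_iff]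
  -- `g` lies in the ideal spanned by its monomials, so the colon ideals of these monomials
  -- intersect inside `J : g = p`; primality then picks one of them
  have hinf : g.support.inf (fun c => J.colon {monomial c 1}) ≤ p := by
    intro r hr
    have hg : g ∈ Ideal.span ((fun c => monomial c (1 : R)) '' g.support) :=
      Ideal.mem_of_forall_monomial_mem fun c hc => Ideal.subset_span ⟨c, hc, rfl⟩
    have hgr : g ∈ J.colon {r} := by
      refine Ideal.span_le.2 ?_ hg
      rintro _ ⟨c, hc, rfl⟩
      rw [SetLike.mem_coe, Ideal.mem_colon_singleton, mul_comm, ← Ideal.mem_colon_singleton]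
      exact Submodule.mem_finsetInf.1 hr c hc
    rw [hpg, Ideal.mem_colon_singleton, mul_comm, ← Ideal.mem_colon_singleton]
    exact hgr
  obtain ⟨c, hc, hcp⟩ := (Ideal.IsPrime.inf_le' hp).1 hinf
  exact ⟨c, le_antisymm (hle c hc) hcp⟩

end IsMonomialIdeal

end MonomialIdeal

section KillVars

variable {σ R : Type*} [CommSemiring R] (P : σ → Prop) [DecidablePred P]

noncomputable def killVars : MvPolynomial σ R →ₐ[R] MvPolynomial σ R :=
  aeval fun j => if P j then 0 else X j

theorem killVars_monomial (d : σ →₀ ℕ) (a : R) :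
    killVars P (monomial d a) = if ∃ j ∈ d.support, P j then 0 else monomial d a := by
  rw [killVars, aeval_monomial, monomial_eq, algebraMap_eq]
  split_ifs with h
  · obtain ⟨j, hdj, hj⟩ := h
    rw [Finsupp.prod, Finset.prod_eq_zero hdj (by simp [hj, Finsupp.mem_support_iff.1 hdj]),
      mul_zero]
  · push Not at h
    congr 1
    exact Finsupp.prod_congr fun j hj => by rw [if_neg (h j hj)]

theorem coeff_killVars (f : MvPolynomial σ R) (c : σ →₀ ℕ) :
    coeff c (killVars P f) = if ∃ j ∈ c.support, P j then 0 else coeff c f := by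
  classical
  induction f using MvPolynomial.induction_on' with
  | monomial d a =>
    rw [killVars_monomial]
    rcases eq_or_ne d c with rfl | hdc
    · split_ifs <;> simp
    · split_ifs <;> simp [coeff_monomial, hdc]
  | add f g hf hg =>
    rw [map_add, coeff_add, coeff_add, hf, hg]
    split_ifs <;> simp

end KillVars

theorem span_X_eq_ker_killVars {σ R : Type*} [CommSemiring R] (B : Set σ)
    [DecidablePred (· ∈ B)] : Ideal.span (X '' B) = RingHom.ker (killVars (R := R) (· ∈ B)) := by
  refine le_antisymm (Ideal.span_le.2 ?_) fun f hf => mem_ideal_span_X_image.2 fun c hc => ?_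
  · rintro _ ⟨j, hj, rfl⟩
    simp [killVars, hj]
  · by_contra h
    have hcoeff := coeff_killVars (· ∈ B) f c
    rw [if_neg fun ⟨j, hjc, hjB⟩ => h ⟨j, hjB, Finsupp.mem_support_iff.1 hjc⟩,
      RingHom.mem_ker.1 hf, coeff_zero] at hcoeff
    exact mem_support_iff.1 hc hcoeff.symm

theorem isPrime_span_X {σ R : Type*} [CommRing R] [IsDomain R] (B : Set σ) :
    (Ideal.span (X '' B) : Ideal (MvPolynomial σ R)).IsPrime := by
  classical
  rw [span_X_eq_ker_killVars]
  exact RingHom.ker_isPrime _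

theorem Finsupp.le_erase_iff {ι M : Type*} [AddCommMonoid M] [PartialOrder M]
    [CanonicallyOrderedAdd M] {d c : ι →₀ M} {i : ι} : d ≤ c.erase i ↔ d i = 0 ∧ d ≤ c := by
  classical
  simp only [Finsupp.le_def, Finsupp.erase_apply]
  constructor
  · intro h
    exact ⟨by simpa using h i, fun j => (h j).trans (by split_ifs <;> simp)⟩
  · rintro ⟨hdi, h⟩ j
    split_ifs with hj
    · simp [hj, hdi]
    · exact h j

section Deletion

variable {K : Type*} [Field K] {n : ℕ}

theorem deleteVar_eq_map (i : Fin n) (J : Ideal (MvPolynomial (Fin n) K)) :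
    deleteVar i J = J.map (killVars (· = i)) :=
  rfl

theorem deleteVar_pow (i : Fin n) (J : Ideal (MvPolynomial (Fin n) K)) (t : ℕ) :
    deleteVar i (J ^ t) = deleteVar i J ^ t :=
  Ideal.map_pow _ _ _

theorem deleteVar_span_monomial (i : Fin n) (T : Set (Fin n →₀ ℕ)) :
    deleteVar i (Ideal.span ((fun d => monomial d (1 : K)) '' T)) =
      Ideal.span ((fun d => monomial d (1 : K)) '' {d ∈ T | d i = 0}) := by
  rw [deleteVar_eq_map, Ideal.map_span, Set.image_image]
  simp only [killVars_monomial, exists_eq_right, Finsupp.mem_support_iff, ite_not]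
  refine le_antisymm (Ideal.span_le.2 ?_) (Ideal.span_le.2 ?_)
  · rintro _ ⟨d, hd, rfl⟩
    dsimp only
    split_ifs with h
    · exact Ideal.subset_span ⟨d, ⟨hd, h⟩, rfl⟩
    · exact Ideal.zero_mem _
  · rintro _ ⟨d, ⟨hd, hdi⟩, rfl⟩
    exact Ideal.subset_span ⟨d, hd, by simp [hdi]⟩

namespace IsMonomialIdeal

variable {J : Ideal (MvPolynomial (Fin n) K)}

theorem deleteVar (hJ : IsMonomialIdeal J) (i : Fin n) : IsMonomialIdeal (deleteVar i J) := by
  obtain ⟨T, rfl⟩ := hJ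
  exact ⟨_, deleteVar_span_monomial i T⟩

theorem monomial_mem_deleteVar_iff (hJ : IsMonomialIdeal J) (i : Fin n) (c : Fin n →₀ ℕ) :
    monomial c (1 : K) ∈ _root_.deleteVar i J ↔ monomial (c.erase i) 1 ∈ J := by
  obtain ⟨T, rfl⟩ := hJ
  rw [deleteVar_span_monomial, monomial_mem_span_monomial_iff, monomial_mem_span_monomial_iff]
  simp only [Set.mem_ofPred_eq, Finsupp.le_erase_iff, and_assoc]

end IsMonomialIdeal

theorem deleteVar_span_X (i : Fin n) (A : Set (Fin n)) :
    deleteVar i (Ideal.span (X '' A) : Ideal (MvPolynomial (Fin n) K)) =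
      Ideal.span (X '' (A \ {i})) := by
  refine ((isMonomialIdeal_span_X A).deleteVar i).ext (isMonomialIdeal_span_X _) fun c => ?_
  rw [(isMonomialIdeal_span_X A).monomial_mem_deleteVar_iff, monomial_mem_span_X_iff,
    monomial_mem_span_X_iff]
  simp [Finsupp.erase_apply, and_assoc]

theorem deleteVar_span_X_mem_associatedPrimes {J : Ideal (MvPolynomial (Fin n) K)}
    (hJ : IsMonomialIdeal J) {A : Set (Fin n)} {z : Fin n} {m : Fin n →₀ ℕ} (hm : m z = 0)
    (hA : Ideal.span (X '' A) ∈ associatedPrimes (MvPolynomial (Fin n) K)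
      (MvPolynomial (Fin n) K ⧸ (J.colon {monomial m 1} ⊔ Ideal.span {X z}))) :
    deleteVar z (Ideal.span (X '' A)) ∈ associatedPrimes (MvPolynomial (Fin n) K)
      (MvPolynomial (Fin n) K ⧸ deleteVar z J) := by
  have hXz : IsMonomialIdeal (Ideal.span {X z} : Ideal (MvPolynomial (Fin n) K)) := by
    simpa using isMonomialIdeal_span_X (R := K) {z}
  obtain ⟨hp, g, hpg⟩ := mem_associatedPrimes_quotient_iff.1 hA
  obtain ⟨e, hpe⟩ := ((hJ.colon_monomial m).sup hXz).exists_monomial_colon_eq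
    (isMonomialIdeal_span_X A) hp hpg
  have hmem (c : Fin n →₀ ℕ) : monomial c (1 : K) ∈ Ideal.span (X '' A) ↔
      monomial (c + e + m) 1 ∈ J ∨ (c + e) z ≠ 0 := by
    rw [hpe, Ideal.mem_colon_singleton, monomial_mul, one_mul,
      (hJ.colon_monomial m).monomial_mem_sup_iff hXz, Ideal.mem_colon_singleton, monomial_mul,
      one_mul, ← Set.image_singleton, monomial_mem_span_X_iff]
    simp
  have hez : e z = 0 := by
    by_contra hez
    refine hp.ne_top ((Ideal.eq_top_iff_one _).2 ?_)
    simpa using (hmem 0).2 (.inr (by simpa using hez))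
  refine mem_associatedPrimes_quotient_iff.2
    ⟨by rw [deleteVar_span_X]; exact isPrime_span_X _, monomial (e + m) 1, ?_⟩
  -- as `e z = m z = 0`, both sides contain `x^c` iff `x^(c.erase z + e + m) ∈ J`
  refine ((isMonomialIdeal_span_X A).deleteVar z).ext ((hJ.deleteVar z).colon_monomial _)
    fun c => ?_
  have herase : (c + (e + m)).erase z = c.erase z + e + m := by
    rw [Finsupp.erase_add, Finsupp.erase_add, Finsupp.erase_of_notMem_support (f := e) (by simpa),
      Finsupp.erase_of_notMem_support (f := m) (by simpa), add_assoc]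
  rw [(isMonomialIdeal_span_X A).monomial_mem_deleteVar_iff, hmem, Ideal.mem_colon_singleton,
    monomial_mul, one_mul, hJ.monomial_mem_deleteVar_iff, herase]
  simp [hez]

end Deletion

theorem stmt_0_general {K : Type*} [Field K] {n : ℕ}
    (I : Ideal (MvPolynomial (Fin n) K))
    (hI : ∃ S : Set (Fin n →₀ ℕ),
      I = Ideal.span ((fun d => (monomial d (1 : K))) '' S))
    (t : ℕ)
    (A : Set (Fin n)) (p : Ideal (MvPolynomial (Fin n) K))
    (hpA : p = Ideal.span (X '' A))
    (s : ℕ) (y : Fin s → Fin n) (hy : Function.Injective y)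
    (hdel : ∀ i : Fin s,
      deleteVar (y i) p ∉
        associatedPrimes (MvPolynomial (Fin n) K)
          ((MvPolynomial (Fin n) K) ⧸ (deleteVar (y i) I) ^ t)) :
    p ∈ associatedPrimes (MvPolynomial (Fin n) K) ((MvPolynomial (Fin n) K) ⧸ I ^ t) ↔
      p ∈ associatedPrimes (MvPolynomial (Fin n) K)
        ((MvPolynomial (Fin n) K) ⧸ (I ^ t).colon ((Ideal.span {∏ i : Fin s, X (y i)} : Ideal (MvPolynomial (Fin n) K)) :
            Set (MvPolynomial (Fin n) K))) := by
  rw [Submodule.colon_span]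
  refine ⟨fun hp => ?_, fun hp => associatedPrimes_quotient_colon_subset _ hp⟩
  refine mem_associatedPrimes_quotient_colon_prod hp Finset.univ (fun i => X (y i))
    fun i _ u hu hu' => hdel i ?_
  subst hpA
  rw [← deleteVar_pow]
  refine deleteVar_span_X_mem_associatedPrimes ((show IsMonomialIdeal I from hI).pow t)
    (m := ∑ j ∈ u, Finsupp.single (y j) 1) ?_ (by rwa [monomial_sum_one])
  rw [Finsupp.finsetSum_apply]
  exact Finset.sum_eq_zero fun j hj =>
    Finsupp.single_eq_of_ne (hy.ne (Finset.ne_of_mem_erase (hu hj))).symm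

theorem stmt_0 {K : Type*} [Field K] {n : ℕ}
    (I : Ideal (MvPolynomial (Fin n) K))
    (hI : ∃ S : Set (Fin n →₀ ℕ),
      I = Ideal.span ((fun d => (monomial d (1 : K))) '' S))
    (t : ℕ) (ht : 1 ≤ t)
    (A : Set (Fin n)) (p : Ideal (MvPolynomial (Fin n) K))
    (hpA : p = Ideal.span (X '' A)) (hp : p.IsPrime)
    (s : ℕ) (y : Fin s → Fin n) (hy : Function.Injective y)
    (hdel : ∀ i : Fin s,
      deleteVar (y i) p ∉
        associatedPrimes (MvPolynomial (Fin n) K)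
          ((MvPolynomial (Fin n) K) ⧸ (deleteVar (y i) I) ^ t)) :
    p ∈ associatedPrimes (MvPolynomial (Fin n) K) ((MvPolynomial (Fin n) K) ⧸ I ^ t) ↔
      p ∈ associatedPrimes (MvPolynomial (Fin n) K)
        ((MvPolynomial (Fin n) K) ⧸ (I ^ t).colon ((Ideal.span {∏ i : Fin s, X (y i)} : Ideal (MvPolynomial (Fin n) K)) :
            Set (MvPolynomial (Fin n) K))) :=
  stmt_0_general I hI t A p hpA s y hy hdel
end

section
/- Let K be a field and R = K[x_1,…,x_n]. If a square-free monomial ideal I ⊆ R is of well-nearly normally torsion-free type, then I is normal; equivalently (since I is a monomial ideal), for every integer s ≥ 1 and every monomial u ∈ R, if u^k ∈ I^{sk} for some integer k ≥ 1, then u ∈ I^s. -/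
/-!
The minimal primes of a square-free monomial ideal `I` are monomial primes `(X_i : i ∈ C)`, and a
monomial lies in `(X_i : i ∈ C)^t` exactly when its degree in the variables of `C` is at least `t`.
Hence `u^k ∈ I^(sk)` puts `u` into `𝔭^s` for every minimal prime `𝔭`, and into `𝔮^(ℓs)`. When `𝔮`
is associated to `I^s` this is `u ∈ I^s` by the defining decomposition. Otherwise every associated
prime of `I^s` is minimal, and `⋂ 𝔭^s ⊆ I^s`: for `y ∉ I^s` pick an associated prime `𝔭 ⊇ (I^s : y)`
and `w ∉ 𝔭` lying in every other minimal prime; as `I` is radical, `w𝔭 ⊆ I`, so `w^s y ∈ I^s` and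
`w^s ∈ 𝔭`, which is absurd.
-/

open MvPolynomial

/-- A square-free monomial ideal `I` is of well-nearly normally torsion-free type. -/
def IsWellNearlyNTFType {K : Type*} [Field K] {n : ℕ}
    (I : Ideal (MvPolynomial (Fin n) K)) : Prop :=
  (∃ S : Set (Finset (Fin n)),
      I = Ideal.span ((fun T => ∏ i ∈ T, (X i : MvPolynomial (Fin n) K)) '' S)) ∧
  ∃ (ℓ m : ℕ) (A : Set (Fin n)), 1 ≤ ℓ ∧ 1 ≤ m ∧
    (∀ t : ℕ, 1 ≤ t → t ≤ m →
      associatedPrimes (MvPolynomial (Fin n) K) ((MvPolynomial (Fin n) K) ⧸ I ^ t) =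
        I.minimalPrimes) ∧
    (∀ t : ℕ, m + 1 ≤ t →
      associatedPrimes (MvPolynomial (Fin n) K) ((MvPolynomial (Fin n) K) ⧸ I ^ t) ⊆
        I.minimalPrimes ∪ {Ideal.span (X '' A)}) ∧
    (∀ s : ℕ, m + 1 ≤ s →
      Ideal.span (X '' A) ∈
        associatedPrimes (MvPolynomial (Fin n) K) ((MvPolynomial (Fin n) K) ⧸ I ^ s) →
      I ^ s = (⨅ p ∈ I.minimalPrimes, p ^ s) ⊓ (Ideal.span (X '' A)) ^ (ℓ * s))

namespace MvPolynomial

variable {σ R : Type*}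

open scoped Pointwise in
theorem pow_span_X_image_eq_span [CommSemiring R] (C : Set σ) (t : ℕ) :
    Ideal.span (X '' C : Set (MvPolynomial σ R)) ^ t =
      Ideal.span ((monomial · 1) '' {e : σ →₀ ℕ | e.degree = t ∧ ↑e.support ⊆ C}) := by
  rw [Ideal.span, Submodule.span_pow, Finsupp.image_pow_eq_finsuppProd_image]
  simp [monomial_eq, Set.image]

theorem monomial_one_mem_pow_span_X_image_iff [CommSemiring R] [Nontrivial R] {C : Set σ}
    [DecidablePred (· ∈ C)] {t : ℕ} {d : σ →₀ ℕ} :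
    monomial d (1 : R) ∈ Ideal.span (X '' C) ^ t ↔ t ≤ (d.filter (· ∈ C)).degree := by
  classical
  simp only [pow_span_X_image_eq_span, mem_ideal_span_monomial_image, support_monomial,
    if_neg one_ne_zero, Finset.mem_singleton, forall_eq, Set.mem_ofPred_eq]
  constructor
  · rintro ⟨e, ⟨rfl, heC⟩, hed⟩
    refine Finsupp.degree_mono fun i => ?_
    rw [Finsupp.filter_apply]
    split_ifs with hi
    · exact hed i
    · exact (Finsupp.notMem_support_iff.1 fun h => hi (heC h)).le
  · intro ht
    obtain ⟨e, hed, rfl⟩ := Finsupp.exists_le_degree_eq _ t ht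
    refine ⟨e, ⟨rfl, fun i hi => (Finset.mem_filter.1 (Finsupp.support_mono hed hi)).2⟩,
      fun i => (hed i).trans ?_⟩
    rw [Finsupp.filter_apply]
    split_ifs <;> simp

theorem monomial_mem_pow_span_X_image_of_pow_mem [CommSemiring R] [Nontrivial R] {C : Set σ}
    {c k : ℕ} (hk : k ≠ 0) {d : σ →₀ ℕ}
    (h : monomial d (1 : R) ^ k ∈ Ideal.span (X '' C) ^ (c * k)) :
    monomial d (1 : R) ∈ Ideal.span (X '' C) ^ c := by
  classical
  rw [monomial_pow, one_pow, monomial_one_mem_pow_span_X_image_iff, Finsupp.filter_smul,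
    map_nsmul, smul_eq_mul, mul_comm] at h
  exact monomial_one_mem_pow_span_X_image_iff.2
    (Nat.le_of_mul_le_mul_left h (Nat.pos_of_ne_zero hk))

theorem span_X_image_eq_ker_aeval [CommRing R] (C : Set σ) :
    Ideal.span (X '' C : Set (MvPolynomial σ R)) =
      RingHom.ker (aeval (Cᶜ.indicator (X : σ → MvPolynomial σ R))) := by
  set J := Ideal.span (X '' C : Set (MvPolynomial σ R))
  refine le_antisymm (Ideal.span_le.2 ?_) fun f hf => ?_
  · rintro _ ⟨i, hi, rfl⟩
    simp [hi]
  -- modulo `J` the substitution is the identity on every variable, so `f ≡ aeval _ f`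
  · have hφ :
        (Ideal.Quotient.mkₐ R J).comp (aeval (Cᶜ.indicator X)) = Ideal.Quotient.mkₐ R J := by
      refine algHom_ext fun i => ?_
      by_cases hi : i ∈ C
      · simpa [hi, eq_comm (a := (0 : _ ⧸ J)), Ideal.Quotient.eq_zero_iff_mem] using
          (Ideal.subset_span ⟨i, hi, rfl⟩ : X i ∈ J)
      · simp [hi]
    rw [← Ideal.Quotient.eq_zero_iff_mem, ← Ideal.Quotient.mkₐ_eq_mk R, ← hφ, AlgHom.comp_apply,
      RingHom.mem_ker.1 hf, map_zero]

theorem isPrime_span_X_image [CommRing R] [IsDomain R] (C : Set σ) :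
    (Ideal.span (X '' C : Set (MvPolynomial σ R))).IsPrime := by
  rw [span_X_image_eq_ker_aeval]
  exact RingHom.ker_isPrime _

theorem span_prod_X_image_le_span_X_image [CommSemiring R] {S : Set (Finset σ)} {C : Set σ}
    (h : ∀ T ∈ S, ∃ i ∈ T, i ∈ C) :
    Ideal.span ((fun T => ∏ i ∈ T, (X i : MvPolynomial σ R)) '' S) ≤ Ideal.span (X '' C) := by
  rw [Ideal.span_le]
  rintro _ ⟨T, hT, rfl⟩
  obtain ⟨i, hiT, hiC⟩ := h T hT
  exact Ideal.mem_of_dvd _ (Finset.dvd_prod_of_mem X hiT) (Ideal.subset_span ⟨i, hiC, rfl⟩)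

theorem mem_span_prod_X_image_of_forall [CommSemiring R] {S : Set (Finset σ)}
    {f : MvPolynomial σ R} (h : ∀ d ∈ f.support, ∃ T ∈ S, ∀ i ∈ T, d i ≠ 0) :
    f ∈ Ideal.span ((fun T => ∏ i ∈ T, (X i : MvPolynomial σ R)) '' S) := by
  classical
  have hprod (T : Finset σ) :
      ∏ i ∈ T, (X i : MvPolynomial σ R) = monomial (Finsupp.indicator T fun _ _ => 1) 1 := by
    simpa using prod_X_pow (R := R) (fun _ => 1) T
  rw [Set.image_congr fun T _ => hprod T, ← Set.image_image (monomial · 1),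
    mem_ideal_span_monomial_image]
  intro d hd
  obtain ⟨T, hT, hTd⟩ := h d hd
  refine ⟨_, ⟨T, hT, rfl⟩, fun i => ?_⟩
  rw [Finsupp.indicator_apply]
  split_ifs with hi
  · exact Nat.one_le_iff_ne_zero.2 (hTd i hi)
  · exact Nat.zero_le _

theorem isRadical_span_prod_X_image [CommRing R] [IsDomain R] (S : Set (Finset σ)) :
    (Ideal.span ((fun T => ∏ i ∈ T, (X i : MvPolynomial σ R)) '' S)).IsRadical := by
  intro f hf
  refine mem_span_prod_X_image_of_forall fun d hd => ?_
  -- otherwise the prime generated by the variables missing from `d` contains the ideal, hence `f`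
  by_contra! h
  have hle := span_prod_X_image_le_span_X_image (R := R) (C := {i | d i = 0}) h
  obtain ⟨i, hi, hdi⟩ :=
    mem_ideal_span_X_image.1 ((isPrime_span_X_image _).radical_le_iff.2 hle hf) d hd
  exact hdi hi

theorem exists_eq_span_X_image_of_mem_minimalPrimes [CommRing R] [IsDomain R]
    {S : Set (Finset σ)} {P : Ideal (MvPolynomial σ R)}
    (hP : P ∈ (Ideal.span ((fun T => ∏ i ∈ T, (X i : MvPolynomial σ R)) '' S)).minimalPrimes) :
    ∃ C : Set σ, P = Ideal.span (X '' C) := by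
  refine ⟨{i | X i ∈ P}, le_antisymm ?_ ?_⟩
  · refine hP.2 ⟨isPrime_span_X_image _, span_prod_X_image_le_span_X_image fun T hT => ?_⟩ ?_
    · exact hP.1.1.prod_mem_iff.1 (hP.1.2 (Ideal.subset_span ⟨T, hT, rfl⟩))
    · exact Ideal.span_le.2 (by rintro _ ⟨i, hi, rfl⟩; exact hi)
  · exact Ideal.span_le.2 (by rintro _ ⟨i, hi, rfl⟩; exact hi)

end MvPolynomial

namespace Ideal

variable {R : Type*} [CommRing R] [IsNoetherianRing R] {I P : Ideal R}

theorem exists_notMem_mul_mem_of_mem_minimalPrimes (hI : I.IsRadical)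
    (hP : P ∈ I.minimalPrimes) : ∃ w ∉ P, ∀ x ∈ P, w * x ∈ I := by
  classical
  set T := I.finite_minimalPrimes_of_isNoetherianRing.toFinset.erase P
  have hT : ¬ T.inf id ≤ P := by
    rw [hP.1.1.inf_le']
    rintro ⟨p, hpT, hpP⟩
    obtain ⟨hpP', hp⟩ := Finset.mem_erase.1 hpT
    exact hpP' (le_antisymm hpP (hP.2 ((Set.Finite.mem_toFinset _).1 hp).1 hpP))
  obtain ⟨w, hwT, hwP⟩ := SetLike.not_le_iff_exists.1 hT
  refine ⟨w, hwP, fun x hx => ?_⟩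
  rw [← hI.radical, ← sInf_minimalPrimes, Submodule.mem_sInf]
  intro p hp
  by_cases hpP : p = P
  · exact mul_mem_left p w (hpP ▸ hx)
  · exact mul_mem_right x p
      (Finset.inf_le (f := id) (Finset.mem_erase.2 ⟨hpP, (Set.Finite.mem_toFinset _).2 hp⟩) hwT)

theorem iInf_pow_le_pow_of_associatedPrimes_subset (hI : I.IsRadical) {s : ℕ}
    (hs : associatedPrimes R (R ⧸ I ^ s) ⊆ I.minimalPrimes) :
    ⨅ p ∈ I.minimalPrimes, p ^ s ≤ I ^ s := by
  intro y hy
  by_contra hyI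
  obtain ⟨P, hPass, hcolon⟩ := exists_le_isAssociatedPrime_of_isNoetherianRing R
    (Quotient.mk (I ^ s) y) (by rwa [Ne, Quotient.eq_zero_iff_mem])
  have hP : P ∈ I.minimalPrimes := hs hPass
  obtain ⟨w, hwP, hwI⟩ := exists_notMem_mul_mem_of_mem_minimalPrimes hI hP
  have hyP : y ∈ P ^ s := (Submodule.mem_iInf _).1 ((Submodule.mem_iInf _).1 hy P) hP
  have hwy : w ^ s * y ∈ I ^ s := by
    have : (span {w} * P) ^ s ≤ I ^ s :=
      pow_right_mono ((span_singleton_mul_le_iff).2 hwI) s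
    rw [mul_pow, span_singleton_pow] at this
    exact this (mul_mem_mul (mem_span_singleton_self _) hyP)
  refine hwP (hP.1.1.mem_of_pow_mem s (hcolon ?_))
  rw [Submodule.mem_colon_singleton, Submodule.mem_bot, Algebra.smul_def,
    Quotient.algebraMap_eq, ← map_mul, Quotient.eq_zero_iff_mem]
  exact hwy

end Ideal

theorem IsWellNearlyNTFType.associatedPrimes_pow_subset_or_pow_eq {K : Type*} [Field K] {n : ℕ}
    {I : Ideal (MvPolynomial (Fin n) K)} (hI : IsWellNearlyNTFType I) :
    ∃ (ℓ : ℕ) (A : Set (Fin n)), ∀ s : ℕ, 1 ≤ s →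
      associatedPrimes (MvPolynomial (Fin n) K) ((MvPolynomial (Fin n) K) ⧸ I ^ s) ⊆
          I.minimalPrimes ∨
        I ^ s = (⨅ p ∈ I.minimalPrimes, p ^ s) ⊓ (Ideal.span (X '' A)) ^ (ℓ * s) := by
  obtain ⟨-, ℓ, m, A, -, -, hsmall, hlarge, hembedded⟩ := hI
  refine ⟨ℓ, A, fun s hs => ?_⟩
  rcases le_or_gt s m with hsm | hms
  · exact .inl (hsmall s hs hsm).le
  by_cases hA : Ideal.span (X '' A) ∈
      associatedPrimes (MvPolynomial (Fin n) K) ((MvPolynomial (Fin n) K) ⧸ I ^ s)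
  · exact .inr (hembedded s hms hA)
  · refine .inl fun P hP => ?_
    rcases hlarge s hms hP with hPmin | rfl
    · exact hPmin
    · exact absurd hP hA

theorem stmt_3 {K : Type*} [Field K] {n : ℕ}
    (I : Ideal (MvPolynomial (Fin n) K))
    (hI : IsWellNearlyNTFType I) :
    ∀ s : ℕ, 1 ≤ s → ∀ d : Fin n →₀ ℕ,
      (∃ k : ℕ, 1 ≤ k ∧ (monomial d (1 : K)) ^ k ∈ I ^ (s * k)) →
      monomial d (1 : K) ∈ I ^ s := by
  rintro s hs d ⟨k, hk, hdk⟩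
  have hk0 : k ≠ 0 := Nat.one_le_iff_ne_zero.1 hk
  obtain ⟨ℓ, A, hdichotomy⟩ := hI.associatedPrimes_pow_subset_or_pow_eq
  obtain ⟨⟨S, hS⟩, -⟩ := hI
  have hmin : monomial d (1 : K) ∈ ⨅ p ∈ I.minimalPrimes, p ^ s := by
    simp only [Submodule.mem_iInf]
    intro p hp
    obtain ⟨C, rfl⟩ := exists_eq_span_X_image_of_mem_minimalPrimes (hS ▸ hp)
    exact monomial_mem_pow_span_X_image_of_pow_mem hk0 (Ideal.pow_right_mono hp.1.2 _ hdk)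
  rcases hdichotomy s hs with hAss | heq
  · exact Ideal.iInf_pow_le_pow_of_associatedPrimes_subset
      (hS ▸ isRadical_span_prod_X_image S) hAss hmin
  · rw [heq]
    refine ⟨hmin, monomial_mem_pow_span_X_image_of_pow_mem hk0 ?_⟩
    have hle : I ^ (s * k) ≤ Ideal.span (X '' A) ^ (ℓ * s * k) := by
      rw [pow_mul, pow_mul]
      exact Ideal.pow_right_mono (heq.trans_le inf_le_right) k
    exact hle hdk
end

section
/- Let K be a field, R = K[x_1,…,x_n,x_{n+1}], and let I ⊆ R be a monomial ideal none of whose minimal monomial generators is divisible by x_{n+1}. Let 𝔪 = (x_1,…,x_{n+1}). Let g be a minimal monomial generator of I, let f be a monomial of R with f ≠ 1, set h = fg, assume x_{n+1} does not divide h, and let L = x_{n+1}I + hR. If (x_1,…,x_n) ∈ Ass(R/I^t) for some integer t ≥ 1, then 𝔪 ∈ Ass(R/L^{t+1}). -/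
/-!
Write `R = A[y]` with `A = K[x_1,…,x_n]` and `y = x_{n+1}`. Then `I = J[y]` for a monomial ideal
`J` of `A`, and since `y ∤ h` and `f ≠ 1`, `h` lies in `A`, indeed in `(x_1,…,x_n) J`. Some
coefficient of a witness for `(x_1,…,x_n) ∈ Ass(R/I^t)` is a `u ∈ A` with `u ∉ J^t` and
`x_i u ∈ J^t`. Then `w = y^t h u` witnesses `𝔪 ∈ Ass(R/L^{t+1})`: `x_i w ∈ (yI)^t h`, and
`y w ∈ (yI)^{t+1}` because `h u ∈ J^{t+1}`. By the binomial theorem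
`L^{t+1} ⊆ ∑_k y^k h^{t+1-k} J^k`, so, as `h ∈ J`, the `y^t`-coefficient of an element of `L^{t+1}`
lies in `h J^t`; cancelling the nonzerodivisor `h`, `w ∈ L^{t+1}` would give `u ∈ J^t`.
-/

namespace Ideal

variable {R S : Type*} [CommRing R] [CommRing S]

theorem mem_associatedPrimes_quotient_iff [IsNoetherianRing R] {P V : Ideal R} :
    P ∈ associatedPrimes R (R ⧸ V) ↔ P.IsPrime ∧ ∃ u : R, P = V.colon {u} := by
  rw [AssociatedPrimes.mem_iff, isAssociatedPrime_iff, Quotient.mk_surjective.exists]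
  have hcolon (u : R) : (⊥ : Submodule R (R ⧸ V)).colon {Quotient.mk V u} = V.colon {u} := by
    ext r
    simp [Algebra.smul_def, ← map_mul, Quotient.eq_zero_iff_mem]
  simp only [hcolon]

theorem map_colon_singleton (e : R ≃+* S) (V : Ideal R) (u : R) :
    (V.colon {u}).map e = (V.map e).colon {e u} := by
  ext s
  rw [← e.apply_symm_apply s, apply_mem_of_equiv_iff, Submodule.mem_colon_singleton,
    Submodule.mem_colon_singleton, smul_eq_mul, smul_eq_mul, ← map_mul, apply_mem_of_equiv_iff]

variable [IsNoetherianRing R] [IsNoetherianRing S]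

theorem map_mem_associatedPrimes_quotient (e : R ≃+* S) {P V : Ideal R}
    (h : P ∈ associatedPrimes R (R ⧸ V)) : P.map e ∈ associatedPrimes S (S ⧸ V.map e) := by
  obtain ⟨hP, u, rfl⟩ := mem_associatedPrimes_quotient_iff.mp h
  exact mem_associatedPrimes_quotient_iff.mpr
    ⟨map_isPrime_of_equiv e, e u, map_colon_singleton e V u⟩

theorem map_mem_associatedPrimes_quotient_iff (e : R ≃+* S) {P V : Ideal R} :
    P.map e ∈ associatedPrimes S (S ⧸ V.map e) ↔ P ∈ associatedPrimes R (R ⧸ V) := by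
  refine ⟨fun h => ?_, map_mem_associatedPrimes_quotient e⟩
  have h' := map_mem_associatedPrimes_quotient e.symm h
  rwa [map_symm, map_symm, comap_map_of_bijective _ e.bijective,
    comap_map_of_bijective _ e.bijective] at h'

end Ideal

namespace Polynomial

section CommSemiring

variable {A : Type*} [CommSemiring A]

theorem C_mem_map_C_iff {J : Ideal A} {a : A} : C a ∈ J.map C ↔ a ∈ J := by
  simp [Ideal.mem_map_C_iff, coeff_C, apply_ite]

theorem exists_span_eq_map_C {G : Set A[X]} (hG : G ⊆ Set.range C) :
    ∃ J : Ideal A, Ideal.span G = J.map C :=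
  ⟨Ideal.span (C ⁻¹' G), by rw [Ideal.map_span, Set.image_preimage_eq_of_subset hG]⟩

end CommSemiring

variable {A : Type*} [CommRing A] {J : Ideal A} {h : A}

theorem map_C_sup_span_X_eq_comap_constantCoeff (P : Ideal A) :
    P.map C ⊔ Ideal.span {X} = P.comap constantCoeff := by
  refine le_antisymm (sup_le (Ideal.map_le_iff_le_comap.mpr fun a ha => by simpa using ha)
    (Ideal.span_le.mpr <| by simp)) fun p hp => ?_
  rw [← add_sub_cancel (C (p.coeff 0)) p]
  exact Submodule.add_mem_sup (Ideal.mem_map_of_mem C (by simpa using hp))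
    (Ideal.mem_span_singleton.mpr X_dvd_sub_C)

theorem isMaximal_map_C_sup_span_X {P : Ideal A} (hP : P.IsMaximal) :
    (P.map C ⊔ Ideal.span {X}).IsMaximal := by
  rw [map_C_sup_span_X_eq_comap_constantCoeff]
  exact Ideal.comap_isMaximal_of_surjective _ fun a => ⟨C a, coeff_C_zero⟩

theorem pow_span_X_mul_map_C_add_span_C_le (J : Ideal A) (h : A) (s : ℕ) :
    (Ideal.span {X} * J.map C + Ideal.span {C h}) ^ s ≤
      ∑ k ∈ Finset.range (s + 1), Ideal.span {X ^ k * C h ^ (s - k)} * (J ^ k).map C := by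
  rw [add_pow]
  refine Finset.sum_le_sum fun k _ => ?_
  calc (Ideal.span {X} * J.map C) ^ k * Ideal.span {C h} ^ (s - k) * (s.choose k : Ideal A[X])
      ≤ (Ideal.span {X} * J.map C) ^ k * Ideal.span {C h} ^ (s - k) := Ideal.mul_le_left
    _ = _ := by
      rw [mul_pow, Ideal.span_singleton_pow, Ideal.span_singleton_pow, ← Ideal.map_pow,
        mul_right_comm, Ideal.span_singleton_mul_span_singleton]

theorem pow_mul_mem_span_singleton_mul_pow (hh : h ∈ J) {k t : ℕ} (hk : k ≤ t) {z : A}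
    (hz : z ∈ J ^ k) : h ^ (t + 1 - k) * z ∈ Ideal.span {h} * J ^ t := by
  obtain ⟨m, rfl⟩ := Nat.exists_eq_add_of_le hk
  rw [show k + m + 1 - k = m + 1 by omega, pow_succ', mul_assoc, add_comm k m, pow_add]
  exact Ideal.mul_mem_mul (Ideal.mem_span_singleton_self h)
    (Ideal.mul_mem_mul (Ideal.pow_mem_pow hh _) hz)

theorem coeff_mem_of_mem_pow_span_X_mul_map_C_add_span_C (hh : h ∈ J) {t : ℕ} {p : A[X]}
    (hp : p ∈ (Ideal.span {X} * J.map C + Ideal.span {C h}) ^ (t + 1)) :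
    p.coeff t ∈ Ideal.span {h} * J ^ t := by
  refine Finset.sum_induction _ (fun I : Ideal A[X] => ∀ p ∈ I, p.coeff t ∈ Ideal.span {h} * J ^ t)
    ?_ ?_ ?_ p (pow_span_X_mul_map_C_add_span_C_le J h (t + 1) hp)
  · intro I₁ I₂ h₁ h₂ p hp
    obtain ⟨p₁, hp₁, p₂, hp₂, rfl⟩ := Submodule.mem_sup.mp hp
    rw [coeff_add]
    exact add_mem (h₁ p₁ hp₁) (h₂ p₂ hp₂)
  · simp [Submodule.zero_eq_bot]
  · intro k _ p hp
    obtain ⟨z, hz, rfl⟩ := Ideal.mem_span_singleton_mul.mp hp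
    rw [mul_assoc, ← C_pow, coeff_X_pow_mul', coeff_C_mul]
    split_ifs with hkt
    · exact pow_mul_mem_span_singleton_mul_pow hh hkt (Ideal.mem_map_C_iff.mp hz _)
    · exact zero_mem _

theorem X_pow_mul_C_mem_pow_span_X_mul_map_C {k : ℕ} {z : A} (hz : z ∈ J ^ k) :
    X ^ k * C z ∈ (Ideal.span {X} * J.map C) ^ k := by
  rw [mul_pow, Ideal.span_singleton_pow, ← Ideal.map_pow]
  exact Ideal.mul_mem_mul (Ideal.mem_span_singleton_self _) (Ideal.mem_map_of_mem C hz)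

theorem X_pow_mul_C_mul_notMem_pow (hh : h ∈ J) (hreg : IsLeftRegular h) {t : ℕ} {c : A}
    (hc : c ∉ J ^ t) :
    X ^ t * C (h * c) ∉ (Ideal.span {X} * J.map C + Ideal.span {C h}) ^ (t + 1) := fun hw => by
  have hcoeff := coeff_mem_of_mem_pow_span_X_mul_map_C_add_span_C hh hw
  rw [coeff_X_pow_mul', if_pos le_rfl, Nat.sub_self, coeff_C_zero] at hcoeff
  obtain ⟨z, hz, hzc⟩ := Ideal.mem_span_singleton_mul.mp hcoeff
  exact hc (hreg hzc ▸ hz)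

theorem exists_notMem_forall_mul_mem_of_map_C_mem_associatedPrimes [IsNoetherianRing A]
    {P V : Ideal A} (hass : P.map C ∈ associatedPrimes A[X] (A[X] ⧸ V.map C)) :
    ∃ c ∉ V, ∀ a ∈ P, a * c ∈ V := by
  obtain ⟨hprime, u, hu⟩ := Ideal.mem_associatedPrimes_quotient_iff.mp hass
  obtain ⟨k, hk⟩ : ∃ k, u.coeff k ∉ V := by
    by_contra! hcoeff
    refine hprime.ne_top (hu.trans ?_)
    rw [Submodule.colon_eq_top_iff_subset, Set.singleton_subset_iff]
    exact Ideal.mem_map_C_iff.mpr hcoeff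
  refine ⟨u.coeff k, hk, fun a ha => ?_⟩
  have hCa : C a * u ∈ V.map C := by
    rw [← smul_eq_mul, ← Submodule.mem_colon_singleton, ← hu]
    exact Ideal.mem_map_of_mem C ha
  simpa using Ideal.mem_map_C_iff.mp hCa k

theorem map_C_sup_span_X_le_colon {P : Ideal A} {t : ℕ} {c : A} (hPc : ∀ a ∈ P, a * c ∈ J ^ t)
    (hhc : h * c ∈ J ^ (t + 1)) :
    P.map C ⊔ Ideal.span {X} ≤
      ((Ideal.span {X} * J.map C + Ideal.span {C h}) ^ (t + 1)).colon {X ^ t * C (h * c)} := by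
  have hXJ (m : ℕ) : (Ideal.span {X} * J.map C) ^ m ≤
      (Ideal.span {X} * J.map C + Ideal.span {C h}) ^ m :=
    Ideal.pow_right_mono le_sup_left m
  refine sup_le (Ideal.map_le_iff_le_comap.mpr fun a ha => ?_)
    (Ideal.span_le.mpr <| Set.singleton_subset_iff.mpr ?_)
  · have hw : C a * (X ^ t * C (h * c)) = X ^ t * C (a * c) * C h := by
      simp only [map_mul]; ring
    rw [Ideal.mem_comap, Submodule.mem_colon_singleton, smul_eq_mul, hw, pow_succ]
    exact Ideal.mul_mem_mul (hXJ t (X_pow_mul_C_mem_pow_span_X_mul_map_C (hPc a ha)))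
      (Ideal.mem_sup_right (Ideal.mem_span_singleton_self _))
  · rw [SetLike.mem_coe, Submodule.mem_colon_singleton, smul_eq_mul, ← mul_assoc, ← pow_succ']
    exact hXJ (t + 1) (X_pow_mul_C_mem_pow_span_X_mul_map_C hhc)

theorem map_C_sup_span_X_mem_associatedPrimes [IsNoetherianRing A] {P : Ideal A}
    (hP : P.IsMaximal) (hPJ : h ∈ P * J) (hreg : IsLeftRegular h) {t : ℕ}
    (hass : P.map C ∈ associatedPrimes A[X] (A[X] ⧸ (J ^ t).map C)) :
    P.map C ⊔ Ideal.span {X} ∈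
      associatedPrimes A[X] (A[X] ⧸ (Ideal.span {X} * J.map C + Ideal.span {C h}) ^ (t + 1)) := by
  obtain ⟨c, hc, hPc⟩ := exists_notMem_forall_mul_mem_of_map_C_mem_associatedPrimes hass
  have hhc : h * c ∈ J ^ (t + 1) := by
    refine Submodule.mul_induction_on hPJ (fun a ha b hb => ?_) fun x y hx hy => ?_
    · rw [mul_right_comm, mul_comm, pow_succ']
      exact Ideal.mul_mem_mul hb (hPc a ha)
    · rw [add_mul]
      exact add_mem hx hy
  have hQ := isMaximal_map_C_sup_span_X hP
  have hne : ((Ideal.span {X} * J.map C + Ideal.span {C h}) ^ (t + 1)).colon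
      {X ^ t * C (h * c)} ≠ ⊤ := by
    rw [Ne, Submodule.colon_eq_top_iff_subset, Set.singleton_subset_iff]
    exact X_pow_mul_C_mul_notMem_pow (Ideal.mul_le_right hPJ) hreg hc
  exact Ideal.mem_associatedPrimes_quotient_iff.mpr
    ⟨hQ.isPrime, _, hQ.eq_of_le hne (map_C_sup_span_X_le_colon hPc hhc)⟩

end Polynomial

namespace MvPolynomial

theorem ker_constantCoeff_eq_idealOfVars (σ R : Type*) [CommSemiring R] :
    RingHom.ker (constantCoeff : MvPolynomial σ R →+* R) = idealOfVars σ R := by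
  ext p
  rw [RingHom.mem_ker, ← pow_one (idealOfVars σ R), mem_pow_idealOfVars_iff']
  simp [Finsupp.degree_eq_zero_iff, constantCoeff_eq]

theorem isMaximal_idealOfVars (σ K : Type*) [Field K] : (idealOfVars σ K).IsMaximal := by
  rw [← ker_constantCoeff_eq_idealOfVars]
  exact RingHom.ker_isMaximal_of_surjective _ fun k => ⟨C k, constantCoeff_C σ k⟩

variable (R : Type*) [CommSemiring R] (n : ℕ)

noncomputable def finSuccLastEquiv :
    MvPolynomial (Fin (n + 1)) R ≃+* Polynomial (MvPolynomial (Fin n) R) :=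
  ((renameEquiv R finSuccEquivLast).trans (optionEquivLeft R (Fin n))).toRingEquiv

variable {R n}

@[simp]
theorem finSuccLastEquiv_X_castSucc (i : Fin n) :
    finSuccLastEquiv R n (X i.castSucc) = Polynomial.C (X i) := by
  simp [finSuccLastEquiv, finSuccEquivLast_castSucc]

@[simp]
theorem finSuccLastEquiv_X_last : finSuccLastEquiv R n (X (Fin.last n)) = Polynomial.X := by
  simp [finSuccLastEquiv, finSuccEquivLast_last]

theorem finSuccLastEquiv_monomial_mem_range_C {d : Fin (n + 1) →₀ ℕ} (hd : d (Fin.last n) = 0)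
    (r : R) : finSuccLastEquiv R n (monomial d r) ∈ Set.range Polynomial.C := by
  refine ⟨monomial (d.mapDomain finSuccEquivLast).some r, ?_⟩
  simp [finSuccLastEquiv, rename_monomial, optionEquivLeft_monomial,
    Finsupp.mapDomain_equiv_apply, hd]

theorem monomial_mem_span_X_castSucc {d : Fin (n + 1) →₀ ℕ} (hd : d ≠ 0)
    (hdl : d (Fin.last n) = 0) (r : R) :
    monomial d r ∈ Ideal.span (Set.range fun i : Fin n => (X i.castSucc : MvPolynomial _ R)) := by
  classical
  obtain ⟨j, hj⟩ : ∃ j, d j ≠ 0 := by simpa [Finsupp.ext_iff] using hd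
  rw [← Function.comp_def X Fin.castSucc, Set.range_comp, mem_ideal_span_X_image]
  intro m hm
  rw [Finset.mem_singleton.mp (support_monomial_subset hm)]
  cases j using Fin.lastCases with
  | last => exact absurd hdl hj
  | cast i => exact ⟨i.castSucc, ⟨i, rfl⟩, hj⟩

theorem exists_map_finSuccLastEquiv_eq_map_C {S : Set (Fin (n + 1) →₀ ℕ)}
    (hS : ∀ d ∈ S, d (Fin.last n) = 0) :
    ∃ J : Ideal (MvPolynomial (Fin n) R),
      (Ideal.span ((fun d => monomial d (1 : R)) '' S)).map (finSuccLastEquiv R n) =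
        J.map Polynomial.C := by
  rw [Ideal.map_span, ← Set.image_comp]
  exact Polynomial.exists_span_eq_map_C (Set.image_subset_iff.mpr fun d hd =>
    finSuccLastEquiv_monomial_mem_range_C (hS d hd) 1)

theorem map_finSuccLastEquiv_span_X_castSucc :
    (Ideal.span (Set.range fun i : Fin n => (X i.castSucc : MvPolynomial _ R))).map
      (finSuccLastEquiv R n) = (idealOfVars (Fin n) R).map Polynomial.C := by
  rw [Ideal.map_span, Ideal.map_span, ← Set.range_comp, ← Set.range_comp]
  congr 2
  funext i
  simp

theorem map_finSuccLastEquiv_span_range_X :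
    (Ideal.span (Set.range (X : Fin (n + 1) → MvPolynomial _ R))).map (finSuccLastEquiv R n) =
      (idealOfVars (Fin n) R).map Polynomial.C ⊔ Ideal.span {Polynomial.X} := by
  rw [Ideal.map_span, Ideal.map_span, ← Ideal.span_union]
  congr 1
  ext p
  simp [Fin.exists_fin_succ', eq_comm, or_comm]

end MvPolynomial

open MvPolynomial

theorem stmt_6_general {K : Type*} [Field K] {n : ℕ}
    (I : Ideal (MvPolynomial (Fin (n + 1)) K))
    -- `I` is a monomial ideal none of whose generators is divisible by `x_{n+1}`:
    (hI : ∃ S : Set (Fin (n + 1) →₀ ℕ), (∀ d ∈ S, d (Fin.last n) = 0) ∧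
      I = Ideal.span ((fun d => (monomial d (1 : K))) '' S))
    -- `g = monomial e 1` is a minimal monomial generator of `I`:
    (e : Fin (n + 1) →₀ ℕ)
    (hgI : monomial e (1 : K) ∈ I)
    -- `f = monomial a 1 ≠ 1`, `h = f * g`, and `x_{n+1}` does not divide `h`:
    (a : Fin (n + 1) →₀ ℕ) (ha : a ≠ 0)
    (hh : (a + e) (Fin.last n) = 0)
    (L : Ideal (MvPolynomial (Fin (n + 1)) K))
    (hL : L = Ideal.span {X (Fin.last n)} * I + Ideal.span {monomial (a + e) (1 : K)})
    (t : ℕ)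
    (hass : Ideal.span (Set.range fun i : Fin n => (X (Fin.castSucc i) : MvPolynomial (Fin (n + 1)) K)) ∈
      associatedPrimes (MvPolynomial (Fin (n + 1)) K)
        ((MvPolynomial (Fin (n + 1)) K) ⧸ I ^ t)) :
    Ideal.span (Set.range (X : Fin (n + 1) → MvPolynomial (Fin (n + 1)) K)) ∈
      associatedPrimes (MvPolynomial (Fin (n + 1)) K)
        ((MvPolynomial (Fin (n + 1)) K) ⧸ L ^ (t + 1)) := by
  obtain ⟨S, hS, rfl⟩ := hI
  obtain ⟨hal, hel⟩ : a (Fin.last n) = 0 ∧ e (Fin.last n) = 0 := by simpa using hh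
  obtain ⟨J, hJ⟩ := exists_map_finSuccLastEquiv_eq_map_C (R := K) hS
  obtain ⟨α, hα⟩ := finSuccLastEquiv_monomial_mem_range_C (R := K) hal 1
  obtain ⟨γ, hγ⟩ := finSuccLastEquiv_monomial_mem_range_C (R := K) hel 1
  have hαP : α ∈ idealOfVars (Fin n) K := by
    rw [← Polynomial.C_mem_map_C_iff, hα, ← map_finSuccLastEquiv_span_X_castSucc]
    exact Ideal.mem_map_of_mem _ (monomial_mem_span_X_castSucc ha hal 1)
  have hγJ : γ ∈ J := by
    rw [← Polynomial.C_mem_map_C_iff, hγ, ← hJ]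
    exact Ideal.mem_map_of_mem _ hgI
  have hC : finSuccLastEquiv K n (monomial (a + e) 1) = Polynomial.C (α * γ) := by
    rw [← one_mul (1 : K), ← monomial_mul, map_mul, ← hα, ← hγ, Polynomial.C_mul]
  have hreg : IsLeftRegular (α * γ) :=
    (IsRegular.of_ne_zero fun h0 => by simp [h0] at hC).left
  have hLmap : L.map (finSuccLastEquiv K n) =
      Ideal.span {Polynomial.X} * J.map Polynomial.C + Ideal.span {Polynomial.C (α * γ)} := by
    rw [hL, Ideal.add_eq_sup, Ideal.map_sup, Ideal.map_mul, hJ, Ideal.map_span, Ideal.map_span,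
      Set.image_singleton, Set.image_singleton, hC, finSuccLastEquiv_X_last, Ideal.add_eq_sup]
  have hass' := (Ideal.map_mem_associatedPrimes_quotient_iff (finSuccLastEquiv K n)).mpr hass
  rw [map_finSuccLastEquiv_span_X_castSucc, Ideal.map_pow, hJ, ← Ideal.map_pow] at hass'
  have key := Polynomial.map_C_sup_span_X_mem_associatedPrimes (isMaximal_idealOfVars (Fin n) K)
    (Ideal.mul_mem_mul hαP hγJ) hreg hass'
  rw [← map_finSuccLastEquiv_span_range_X, ← hLmap, ← Ideal.map_pow] at key
  exact (Ideal.map_mem_associatedPrimes_quotient_iff (finSuccLastEquiv K n)).mp key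

theorem stmt_6 {K : Type*} [Field K] {n : ℕ}
    (I : Ideal (MvPolynomial (Fin (n + 1)) K))
    -- `I` is a monomial ideal none of whose generators is divisible by `x_{n+1}`:
    (hI : ∃ S : Set (Fin (n + 1) →₀ ℕ), (∀ d ∈ S, d (Fin.last n) = 0) ∧
      I = Ideal.span ((fun d => (monomial d (1 : K))) '' S))
    -- `g = monomial e 1` is a minimal monomial generator of `I`:
    (e : Fin (n + 1) →₀ ℕ)
    (hgI : monomial e (1 : K) ∈ I)
    (hgmin : ∀ e' : Fin (n + 1) →₀ ℕ, monomial e' (1 : K) ∈ I → e' ≤ e → e' = e)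
    -- `f = monomial a 1 ≠ 1`, `h = f * g`, and `x_{n+1}` does not divide `h`:
    (a : Fin (n + 1) →₀ ℕ) (ha : a ≠ 0)
    (hh : (a + e) (Fin.last n) = 0)
    (L : Ideal (MvPolynomial (Fin (n + 1)) K))
    (hL : L = Ideal.span {X (Fin.last n)} * I + Ideal.span {monomial (a + e) (1 : K)})
    (t : ℕ) (ht : 1 ≤ t)
    (hass : Ideal.span (Set.range fun i : Fin n => (X (Fin.castSucc i) : MvPolynomial (Fin (n + 1)) K)) ∈
      associatedPrimes (MvPolynomial (Fin (n + 1)) K)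
        ((MvPolynomial (Fin (n + 1)) K) ⧸ I ^ t)) :
    Ideal.span (Set.range (X : Fin (n + 1) → MvPolynomial (Fin (n + 1)) K)) ∈
      associatedPrimes (MvPolynomial (Fin (n + 1)) K)
        ((MvPolynomial (Fin (n + 1)) K) ⧸ L ^ (t + 1)) :=
  stmt_6_general I hI e hgI a ha hh L hL t hass
end

section
/- Let G be a finite connected simple graph and let H = C(G) be the cone over G, obtained by adding a new vertex w to G and joining w to every vertex of G. Let R_G = K[x_v : v ∈ V(G)] and R_H = K[x_v : v ∈ V(H)] be polynomial rings over a field K, and let J(G) ⊆ R_G and J(H) ⊆ R_H be the cover ideals of G and H. If the prime ideal (x_v : v ∈ V(G)) belongs to Ass(R_G/J(G)^t) for some integer t ≥ 1, then the prime ideal (x_v : v ∈ V(H)) belongs to Ass(R_H/J(H)^{t+1}). -/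
open MvPolynomial

/-- The cone over a simple graph `G`: add a new vertex (`none`) joined to every vertex of `G`. -/
def cone {V : Type*} (G : SimpleGraph V) : SimpleGraph (Option V) where
  Adj a b := a ≠ b ∧ ∀ u v : V, a = some u → b = some v → G.Adj u v
  symm := by
    constructor
    rintro a b ⟨hne, h⟩
    exact ⟨hne.symm, fun u v hb ha => (h v u ha hb).symm⟩
  loopless := by
    constructor
    rintro a ⟨hne, -⟩
    exact hne rfl

/-- The cover ideal `J(G) = ⋂_{{u,v} ∈ E(G)} (x_u, x_v)` of a simple graph. -/
noncomputable def coverIdeal {V : Type*} (K : Type*) [Field K] (G : SimpleGraph V) :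
    Ideal (MvPolynomial V K) :=
  ⨅ (u : V) (v : V) (_ : G.Adj u v), Ideal.span {X u, X v}

/-!
Write `w` for the apex of the cone, `P = ∏ x_v` and compute in `K[x_v : v ∈ V][x_w]` through
`optionEquivLeft`. A vertex cover of `C(G)` either contains `w`, and then a vertex cover of `G`,
or contains all of `V`; hence `J(C(G)) = x_w J(G) + (P)`.

Pick `f` with `J(G)^t : f = (x_v : v ∈ V)` and put `Φ = x_w^t P f`. Then
`x_v Φ = x_w^t (x_v f) · P` lies in `J(C(G))^t J(C(G))`, and `x_w Φ = x_w^{t+1} (P f)` lies in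
`J(C(G))^{t+1}` because `P f = (x_{v₀} f) · ∏_{v ≠ v₀} x_v ∈ J(G)^t J(G)`. On the other hand the
`x_w^t`-coefficient of an element of `(x_w J(G) + (P))^{t+1}` lies in `P J(G)^t`, as every product
of `t + 1` generators of `x_w`-degree at most `t` uses the generator `P`; so `Φ ∈ J(C(G))^{t+1}`
would give `f ∈ J(G)^t` after cancelling `P`. Thus `J(C(G))^{t+1} : Φ` is the maximal ideal
`(x_a : a ∈ V(C(G)))`.
-/

namespace Polynomial

variable {R : Type*} [CommRing R]

noncomputable def coneIdeal (J : Ideal R) (P : R) : Ideal R[X] :=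
  Ideal.span {X} * J.map C ⊔ Ideal.span {C P}

variable {J : Ideal R} {P : R}

theorem coneIdeal_le_map_C (hP : P ∈ J) : coneIdeal J P ≤ J.map C :=
  sup_le Ideal.mul_le_right ((Ideal.span_singleton_le_iff_mem _).2 (Ideal.mem_map_of_mem _ hP))

theorem X_pow_mul_C_mem_coneIdeal_pow {n : ℕ} {a : R} (ha : a ∈ J ^ n) :
    X ^ n * C a ∈ coneIdeal J P ^ n := by
  have hle : (Ideal.span {X} * J.map C) ^ n ≤ coneIdeal J P ^ n :=
    Ideal.pow_right_mono le_sup_left n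
  rw [mul_pow, Ideal.span_singleton_pow, ← Ideal.map_pow] at hle
  exact hle (Ideal.mul_mem_mul (Ideal.mem_span_singleton_self _) (Ideal.mem_map_of_mem _ ha))

theorem coneIdeal_pow_succ_le (hP : P ∈ J) (n : ℕ) :
    coneIdeal J P ^ (n + 1) ≤ (Ideal.span {P} * J ^ n).map C ⊔ Ideal.span {X ^ (n + 1)} := by
  induction n with
  | zero =>
    rw [zero_add, pow_one, pow_zero, mul_one, pow_one, Ideal.map_span, Set.image_singleton]
    exact sup_le (Ideal.mul_le_left.trans le_sup_right) le_sup_left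
  | succ n ih =>
    have hpow : coneIdeal J P ^ (n + 1) ≤ (J ^ (n + 1)).map C := by
      rw [Ideal.map_pow]; exact Ideal.pow_right_mono (coneIdeal_le_map_C hP) _
    rw [pow_succ, coneIdeal, Ideal.mul_sup]
    refine sup_le ((Ideal.mul_mono_left ih).trans ?_) ((Ideal.mul_mono_left hpow).trans ?_)
    · rw [Ideal.sup_mul]
      refine sup_le_sup ?_ ?_
      · calc _ ≤ (Ideal.span {P} * J ^ n).map C * J.map C :=
            Ideal.mul_mono_right Ideal.mul_le_right
          _ = _ := by rw [← Ideal.map_mul, mul_assoc, ← pow_succ]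
      · calc _ ≤ Ideal.span {X ^ (n + 1)} * Ideal.span {X} :=
            Ideal.mul_mono_right (Ideal.mul_le_left (I := Ideal.span {(X : R[X])}))
          _ = _ := by rw [Ideal.span_singleton_mul_span_singleton, ← pow_succ]
    · rw [← Set.image_singleton, ← Ideal.map_span, ← Ideal.map_mul, mul_comm]
      exact le_sup_left

theorem coeff_mem_of_mem_map_C_sup_span_X_pow {A : Ideal R} {n : ℕ} {p : R[X]}
    (hp : p ∈ A.map C ⊔ Ideal.span {X ^ (n + 1)}) : p.coeff n ∈ A := by
  obtain ⟨a, ha, b, hb, rfl⟩ := Submodule.mem_sup.1 hp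
  obtain ⟨c, rfl⟩ := Ideal.mem_span_singleton.1 hb
  rw [coeff_add, coeff_X_pow_mul', if_neg (by omega), add_zero]
  exact Ideal.mem_map_C_iff.1 ha n

theorem X_pow_mul_C_mul_notMem_coneIdeal_pow_succ [IsDomain R] (hP : P ∈ J) (hP₀ : P ≠ 0)
    {t : ℕ} {f : R} (hf : f ∉ J ^ t) : X ^ t * C (P * f) ∉ coneIdeal J P ^ (t + 1) := by
  intro hmem
  have hcoeff := coeff_mem_of_mem_map_C_sup_span_X_pow (coneIdeal_pow_succ_le hP t hmem)
  rw [coeff_X_pow_mul', if_pos le_rfl, Nat.sub_self, coeff_C_zero] at hcoeff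
  obtain ⟨g, hg, hPg⟩ := Ideal.mem_span_singleton_mul.1 hcoeff
  exact hf (mul_left_cancel₀ hP₀ hPg ▸ hg)

theorem mem_coneIdeal_of_coeff {p : R[X]} (hsucc : ∀ n, p.coeff (n + 1) ∈ J)
    (hzero : P ∣ p.coeff 0) : p ∈ coneIdeal J P := by
  rw [← X_mul_divX_add p]
  refine add_mem (Ideal.mem_sup_left (Ideal.mul_mem_mul (Ideal.mem_span_singleton_self X)
    (Ideal.mem_map_C_iff.2 fun n => ?_))) (Ideal.mem_sup_right ?_)
  · rw [coeff_divX]; exact hsucc n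
  · obtain ⟨c, hc⟩ := hzero
    exact Ideal.mem_span_singleton.2 ⟨C c, by rw [hc, C_mul]⟩

theorem dvd_coeff_zero_of_mem_span_X_C {a : R} {p : R[X]} (hp : p ∈ Ideal.span {X, C a}) :
    a ∣ p.coeff 0 := by
  obtain ⟨b, c, rfl⟩ := Ideal.mem_span_pair.1 hp
  simp [mul_coeff_zero]

end Polynomial

section AssociatedPrimes

variable {R : Type*} [CommRing R] {I : Ideal R}

theorem mem_colon_bot_singleton_mk_iff {r f : R} :
    r ∈ (⊥ : Submodule R (R ⧸ I)).colon {Ideal.Quotient.mk I f} ↔ r * f ∈ I := by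
  rw [Submodule.mem_colon_singleton, Submodule.mem_bot, Algebra.smul_def,
    Ideal.Quotient.algebraMap_eq, ← map_mul, Ideal.Quotient.eq_zero_iff_mem]

theorem exists_notMem_forall_mul_mem_of_mem_associatedPrimes [IsNoetherianRing R] {p : Ideal R}
    (hp : p ∈ associatedPrimes R (R ⧸ I)) : ∃ f ∉ I, ∀ r ∈ p, r * f ∈ I := by
  obtain ⟨hprime, x, rfl⟩ := isAssociatedPrime_iff.1 hp
  obtain ⟨f, rfl⟩ := Ideal.Quotient.mk_surjective x
  refine ⟨f, fun hf => hprime.ne_top ?_, fun r hr => mem_colon_bot_singleton_mk_iff.1 hr⟩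
  exact (Ideal.eq_top_iff_one _).2 (mem_colon_bot_singleton_mk_iff.2 (by rwa [one_mul]))

theorem span_mem_associatedPrimes_of_isMaximal {s : Set R} (hs : (Ideal.span s).IsMaximal)
    {f : R} (hf : f ∉ I) (h : ∀ r ∈ s, r * f ∈ I) :
    Ideal.span s ∈ associatedPrimes R (R ⧸ I) := by
  have hcolon : Ideal.span s = (⊥ : Submodule R (R ⧸ I)).colon {Ideal.Quotient.mk I f} := by
    refine hs.eq_of_le (fun htop => hf ?_) (Ideal.span_le.2 fun r hr =>
      mem_colon_bot_singleton_mk_iff.2 (h r hr))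
    rw [← one_mul f, ← mem_colon_bot_singleton_mk_iff, htop]
    exact Submodule.mem_top
  exact ⟨hs.isPrime, Ideal.Quotient.mk I f, by rw [← hcolon, hs.isPrime.radical]⟩

end AssociatedPrimes

section MvPolynomial

theorem prod_X_dvd_of_forall_X_dvd {K V : Type*} [Field K] {s : Finset V} {p : MvPolynomial V K}
    (h : ∀ v ∈ s, X v ∣ p) : ∏ v ∈ s, X v ∣ p :=
  Finset.prod_dvd_of_isRelPrime (fun u _ v _ huv =>
    X_prime.irreducible.isRelPrime_iff_not_dvd.2 (by simpa using huv)) h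

theorem span_range_X_isMaximal {σ K : Type*} [Field K] :
    (Ideal.span (Set.range (X : σ → MvPolynomial σ K))).IsMaximal := by
  suffices Ideal.span (Set.range X) = RingHom.ker (constantCoeff : MvPolynomial σ K →+* K) by
    rw [this]
    exact RingHom.ker_isMaximal_of_surjective _ fun k => ⟨C k, constantCoeff_C _ k⟩
  refine le_antisymm (Ideal.span_le.2 ?_) fun p hp => ?_
  · rintro - ⟨i, rfl⟩
    exact constantCoeff_X K i
  · rw [← Set.image_univ, mem_ideal_span_X_image]
    intro m hm
    by_contra! hc
    have : m = 0 := Finsupp.ext fun i => by simpa using hc i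
    rw [mem_support_iff, this, ← constantCoeff_eq] at hm
    exact hm hp

theorem optionEquivLeft_rename_some {R V : Type*} [CommSemiring R] (p : MvPolynomial V R) :
    optionEquivLeft R V (rename some p) = Polynomial.C p := by
  induction p using MvPolynomial.induction_on with
  | C a => simp
  | add p q hp hq => simp [hp, hq]
  | mul_X p v hp => simp [hp]

end MvPolynomial

section CoverIdeal

variable {V K : Type*} [Field K] {G : SimpleGraph V}

theorem mem_coverIdeal_iff {p : MvPolynomial V K} :
    p ∈ coverIdeal K G ↔ ∀ u v, G.Adj u v → p ∈ Ideal.span {X u, X v} := by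
  simp only [coverIdeal, Ideal.mem_iInf]

theorem mem_coverIdeal_of_X_dvd {p : MvPolynomial V K}
    (h : ∀ u v, G.Adj u v → X u ∣ p ∨ X v ∣ p) : p ∈ coverIdeal K G := by
  refine mem_coverIdeal_iff.2 fun u v huv => ?_
  rcases h u v huv with hu | hv
  · exact Ideal.mem_of_dvd _ hu (Ideal.subset_span (by simp))
  · exact Ideal.mem_of_dvd _ hv (Ideal.subset_span (by simp))

variable [Fintype V]

theorem prod_X_mem_coverIdeal : ∏ v, (X v : MvPolynomial V K) ∈ coverIdeal K G :=
  mem_coverIdeal_of_X_dvd fun u _ _ => Or.inl (Finset.dvd_prod_of_mem _ (Finset.mem_univ u))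

theorem prod_X_mul_mem_coverIdeal_pow_succ [Nonempty V] {f : MvPolynomial V K} {t : ℕ}
    (hf : ∀ v, X v * f ∈ coverIdeal K G ^ t) :
    (∏ v, X v) * f ∈ coverIdeal K G ^ (t + 1) := by
  classical
  obtain ⟨v₀⟩ := ‹Nonempty V›
  have hcover : ∏ v ∈ Finset.univ.erase v₀, X v ∈ coverIdeal K G := by
    refine mem_coverIdeal_of_X_dvd fun u v huv => ?_
    have hdvd {w : V} (hw : w ≠ v₀) :
        (X w : MvPolynomial V K) ∣ ∏ v ∈ Finset.univ.erase v₀, X v :=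
      Finset.dvd_prod_of_mem _ (Finset.mem_erase.2 ⟨hw, Finset.mem_univ w⟩)
    rcases eq_or_ne u v₀ with rfl | hu
    · exact Or.inr (hdvd (G.ne_of_adj huv).symm)
    · exact Or.inl (hdvd hu)
  rw [← Finset.mul_prod_erase _ _ (Finset.mem_univ v₀), mul_right_comm, pow_succ]
  exact Ideal.mul_mem_mul (hf v₀) hcover

end CoverIdeal

section Cone

variable {V K : Type*} [Field K] {G : SimpleGraph V}

theorem cone_adj_none_some (v : V) : (cone G).Adj none (some v) :=
  ⟨Option.some_ne_none v |>.symm, fun _ _ h => nomatch h⟩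

theorem cone_adj_some_some {u v : V} : (cone G).Adj (some u) (some v) ↔ G.Adj u v :=
  ⟨fun h => h.2 u v rfl rfl,
    fun h => ⟨by simpa using G.ne_of_adj h, by rintro _ _ ⟨⟩ ⟨⟩; exact h⟩⟩

theorem span_X_none_mul_map_rename_le_coverIdeal_cone :
    Ideal.span {X none} * (coverIdeal K G).map (rename some) ≤ coverIdeal K (cone G) := by
  refine le_iInf fun a => le_iInf fun b => le_iInf fun hab => ?_
  match a, b, hab with
  | none, none, hab => exact absurd rfl hab.1
  | none, some v, _ => exact Ideal.mul_le_left.trans (Ideal.span_mono (by simp))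
  | some u, none, _ => exact Ideal.mul_le_left.trans (Ideal.span_mono (by simp))
  | some u, some v, hab =>
    refine Ideal.mul_le_right.trans ?_
    calc (coverIdeal K G).map (rename some)
        ≤ (Ideal.span {X u, X v}).map (rename some) :=
          Ideal.map_mono fun p hp => mem_coverIdeal_iff.1 hp u v (cone_adj_some_some.1 hab)
      _ = Ideal.span {X (some u), X (some v)} := by
          rw [Ideal.map_span, Set.image_pair, rename_X, rename_X]

variable [Fintype V]

theorem prod_X_some_mem_coverIdeal_cone :
    ∏ v, (X (some v) : MvPolynomial (Option V) K) ∈ coverIdeal K (cone G) := by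
  have hdvd (u : V) : (X (some u) : MvPolynomial (Option V) K) ∣ ∏ v, X (some v) :=
    Finset.dvd_prod_of_mem (fun v => X (some v)) (Finset.mem_univ u)
  refine mem_coverIdeal_of_X_dvd fun a b hab => ?_
  match a, b, hab with
  | none, none, hab => exact absurd rfl hab.1
  | _, some v, _ => exact Or.inr (hdvd v)
  | some u, _, _ => exact Or.inl (hdvd u)

theorem map_optionEquivLeft_coverIdeal_cone :
    (coverIdeal K (cone G)).map (optionEquivLeft K V) =
      Polynomial.coneIdeal (coverIdeal K G) (∏ v, X v) := by
  set e := optionEquivLeft K V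
  apply le_antisymm
  · rw [Ideal.map_le_iff_le_comap]
    intro p hp
    have hedge (a b) (h : (cone G).Adj a b) : e p ∈ Ideal.span {e (X a), e (X b)} := by
      simpa [Ideal.map_span, Set.image_pair] using
        Ideal.mem_map_of_mem e (mem_coverIdeal_iff.1 hp a b h)
    refine Polynomial.mem_coneIdeal_of_coeff (fun n => mem_coverIdeal_iff.2 fun u v huv => ?_)
      (prod_X_dvd_of_forall_X_dvd fun v _ => ?_)
    · have h := hedge _ _ (cone_adj_some_some.2 huv)
      rw [optionEquivLeft_X_some, optionEquivLeft_X_some, ← Set.image_pair,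
        ← Ideal.map_span] at h
      exact Ideal.mem_map_C_iff.1 h (n + 1)
    · have h := hedge _ _ (cone_adj_none_some v)
      rw [optionEquivLeft_X_none, optionEquivLeft_X_some] at h
      exact Polynomial.dvd_coeff_zero_of_mem_span_X_C h
  · refine sup_le ?_ ((Ideal.span_singleton_le_iff_mem _).2 ?_)
    · calc Ideal.span {Polynomial.X} * (coverIdeal K G).map Polynomial.C
          ≤ (Ideal.span {X none} * (coverIdeal K G).map (rename some)).map e := by
            rw [Ideal.map_mul, Ideal.map_span, Set.image_singleton, optionEquivLeft_X_none]
            refine Ideal.mul_mono_right (Ideal.map_le_iff_le_comap.2 fun q hq => ?_)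
            rw [Ideal.mem_comap, ← optionEquivLeft_rename_some]
            exact Ideal.mem_map_of_mem _ (Ideal.mem_map_of_mem _ hq)
        _ ≤ _ := Ideal.map_mono span_X_none_mul_map_rename_le_coverIdeal_cone
    · rw [← optionEquivLeft_rename_some, map_prod]
      simp_rw [rename_X]
      exact Ideal.mem_map_of_mem _ prod_X_some_mem_coverIdeal_cone

theorem mem_coverIdeal_cone_pow_iff {n : ℕ} {y : MvPolynomial (Option V) K} :
    y ∈ coverIdeal K (cone G) ^ n ↔
      optionEquivLeft K V y ∈ Polynomial.coneIdeal (coverIdeal K G) (∏ v, X v) ^ n := by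
  rw [← map_optionEquivLeft_coverIdeal_cone, ← Ideal.map_pow]
  exact (Ideal.apply_mem_of_equiv_iff (f := (optionEquivLeft K V).toRingEquiv)).symm

end Cone

theorem stmt_8_general {V K : Type*} [Fintype V] [Field K]
    (G : SimpleGraph V) (hG : G.Connected)
    (t : ℕ)
    (h : Ideal.span (Set.range (X : V → MvPolynomial V K)) ∈
      associatedPrimes (MvPolynomial V K)
        ((MvPolynomial V K) ⧸ (coverIdeal K G) ^ t)) :
    Ideal.span (Set.range (X : Option V → MvPolynomial (Option V) K)) ∈
      associatedPrimes (MvPolynomial (Option V) K)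
        ((MvPolynomial (Option V) K) ⧸ (coverIdeal K (cone G)) ^ (t + 1)) := by
  obtain ⟨f, hf, hXf⟩ := exists_notMem_forall_mul_mem_of_mem_associatedPrimes h
  replace hXf (v : V) : X v * f ∈ coverIdeal K G ^ t := hXf _ (Ideal.subset_span ⟨v, rfl⟩)
  have : Nonempty V := hG.nonempty
  set e := optionEquivLeft K V
  refine span_mem_associatedPrimes_of_isMaximal span_range_X_isMaximal
    (f := e.symm (Polynomial.X ^ t * Polynomial.C ((∏ v, X v) * f))) ?_ ?_
  · rw [mem_coverIdeal_cone_pow_iff, e.apply_symm_apply]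
    exact Polynomial.X_pow_mul_C_mul_notMem_coneIdeal_pow_succ prod_X_mem_coverIdeal
      (Finset.prod_ne_zero_iff.2 fun v _ => X_ne_zero v) hf
  · rintro - ⟨a | v, rfl⟩ <;> rw [mem_coverIdeal_cone_pow_iff, map_mul, e.apply_symm_apply]
    · rw [optionEquivLeft_X_none, ← mul_assoc, ← pow_succ']
      exact Polynomial.X_pow_mul_C_mem_coneIdeal_pow (prod_X_mul_mem_coverIdeal_pow_succ hXf)
    · rw [optionEquivLeft_X_some, pow_succ,
        show Polynomial.C (X v) * (Polynomial.X ^ t * Polynomial.C ((∏ v, X v) * f)) =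
          Polynomial.X ^ t * Polynomial.C (X v * f) * Polynomial.C (∏ v, X v) by
          simp only [map_mul]; ring]
      exact Ideal.mul_mem_mul (Polynomial.X_pow_mul_C_mem_coneIdeal_pow (hXf v))
        (Ideal.mem_sup_right (Ideal.mem_span_singleton_self _))

theorem stmt_8 {V K : Type*} [Fintype V] [Field K]
    (G : SimpleGraph V) (hG : G.Connected)
    (t : ℕ) (ht : 1 ≤ t)
    (h : Ideal.span (Set.range (X : V → MvPolynomial V K)) ∈
      associatedPrimes (MvPolynomial V K)
        ((MvPolynomial V K) ⧸ (coverIdeal K G) ^ t)) :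
    Ideal.span (Set.range (X : Option V → MvPolynomial (Option V) K)) ∈
      associatedPrimes (MvPolynomial (Option V) K)
        ((MvPolynomial (Option V) K) ⧸ (coverIdeal K (cone G)) ^ (t + 1)) :=
  stmt_8_general G hG t h
end

section
/- Let K be a field, R = K[x_1,…,x_n], and let I ⊆ R be a normally torsion-free square-free monomial ideal with minimal monomial generating set G(I) = {u_1,…,u_m}. Let S = R[x_{n+1},…,x_{n+m}] = K[x_1,…,x_{n+m}], let f be a square-free monomial dividing u_m, and set L = (u_1,…,u_{m−1})S + f x_{n+1}⋯x_{n+m} S. Assume f x_{n+1}⋯x_{n+m} ∉ 𝔭^2 for every minimal prime 𝔭 of L, and that the ideal (u_1,…,u_{m−1})S is normally torsion-free. Then L is normal; equivalently (since L is a square-free monomial ideal), for every integer s ≥ 1 and every monomial u ∈ S, if u^k ∈ L^{sk} for some integer k ≥ 1, then u ∈ L^s. -/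
/-!
Write `v = ∏_{i ∈ S} x_i`. Then `J` and `L` are the edge ideals of the hypergraphs `E` and
`E ∪ {S}`, and everything is read off vertex covers. A monomial `x^d` lies in `𝔭_C^t`, where
`𝔭_C = (x_i : i ∈ C)`, iff `t ≤ ∑_{i ∈ C} d_i`; the `𝔭_C` with `C` a minimal vertex cover are
the minimal primes of an edge ideal and the only candidates for its associated primes. Hence
`(x^d)^k ∈ L^{sk}` forces `s ≤ ∑_{i ∈ C} d_i` for every vertex cover `C` of `E ∪ {S}`, and, `J`
being normally torsion-free, `x^e ∈ J^t` as soon as `t ≤ ∑_{i ∈ C} e_i` for every minimal vertex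
cover `C` of `E`: otherwise some `𝔭_C` would be an associated prime of `R/J^t` containing
`J^t : x^e`, but a monomial avoiding `𝔭_C` multiplies `x^e` into `J^t`.

Write `x^d = v^b x^e` with `b = min_{i ∈ S} d_i`. A minimal vertex cover `C` of `E` meeting `S` is
a minimal vertex cover of `E ∪ {S}`, and `v ∉ 𝔭_C²` says that it meets `S` exactly once; one
missing `S` becomes a vertex cover of `E ∪ {S}` once the vertex where `d` is minimal on `S` is
added. Either way `s - b ≤ ∑_{i ∈ C} e_i`, so `x^e ∈ J^{s-b}` and `x^d ∈ L^b L^{s-b} ⊆ L^s`.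
-/

open MvPolynomial

/-- An ideal is normally torsion-free if `Ass(R/I^k) ⊆ Ass(R/I)` for all `k ≥ 1`. -/
def IsNTF {R : Type*} [CommRing R] (I : Ideal R) : Prop :=
  ∀ k : ℕ, 1 ≤ k →
    associatedPrimes R (R ⧸ I ^ k) ⊆ associatedPrimes R (R ⧸ I)

section VertexCover

variable {σ : Type*} {E : Set (Finset σ)} {C : Finset σ}

def IsVertexCover (E : Set (Finset σ)) (C : Finset σ) : Prop :=
  ∀ A ∈ E, ∃ i ∈ A, i ∈ C

theorem IsVertexCover.mono {D : Finset σ} (hC : IsVertexCover E C) (hCD : C ⊆ D) :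
    IsVertexCover E D := fun A hA =>
  (hC A hA).imp fun _ ⟨hiA, hiC⟩ => ⟨hiA, hCD hiC⟩

variable [DecidableEq σ]

theorem Minimal.exists_edge_inter_eq_singleton (hC : Minimal (IsVertexCover E) C) {i : σ}
    (hi : i ∈ C) : ∃ A ∈ E, A ∩ C = {i} := by
  have hnot : ¬ IsVertexCover E (C.erase i) := fun h =>
    Finset.notMem_erase i C (hC.2 h (Finset.erase_subset i C) hi)
  simp only [IsVertexCover, not_forall, not_exists, not_and] at hnot
  obtain ⟨A, hA, hAi⟩ := hnot
  have hAC : ∀ j ∈ A, j ∈ C → j = i := fun j hjA hjC => by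
    by_contra hji
    exact hAi j hjA (Finset.mem_erase.2 ⟨hji, hjC⟩)
  obtain ⟨j, hjA, hjC⟩ := hC.1 A hA
  refine ⟨A, hA, Finset.eq_singleton_iff_unique_mem.2 ⟨?_, fun j hj => ?_⟩⟩
  · exact Finset.mem_inter.2 ⟨hAC j hjA hjC ▸ hjA, hAC j hjA hjC ▸ hjC⟩
  · exact hAC j (Finset.mem_inter.1 hj).1 (Finset.mem_inter.1 hj).2

theorem Minimal.isVertexCover_insert (hC : Minimal (IsVertexCover E) C) {S : Finset σ}
    (hCS : (C ∩ S).Nonempty) : Minimal (IsVertexCover (insert S E)) C := by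
  refine ⟨?_, fun D hD hDC => hC.2 (fun A hA => hD A (Set.mem_insert_of_mem _ hA)) hDC⟩
  obtain ⟨a, ha⟩ := hCS
  rintro A (rfl | hA)
  · exact ⟨a, (Finset.mem_inter.1 ha).2, (Finset.mem_inter.1 ha).1⟩
  · exact hC.1 A hA

end VertexCover

theorem Finsupp.sum_single_one_le_iff {σ : Type*} [DecidableEq σ] {A : Finset σ}
    {m : σ →₀ ℕ} : ∑ i ∈ A, Finsupp.single i 1 ≤ m ↔ ∀ i ∈ A, m i ≠ 0 := by
  simp only [Finsupp.le_def, Finset.sum_apply', Finsupp.single_apply, Finset.sum_ite_eq']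
  refine ⟨fun h i hi => ?_, fun h i => ?_⟩
  · simpa [hi, Nat.one_le_iff_ne_zero] using h i
  · split_ifs with hi
    · exact Nat.one_le_iff_ne_zero.2 (h i hi)
    · exact Nat.zero_le _

namespace MvPolynomial

variable {σ K : Type*}

section CommSemiring

variable [CommSemiring K]

variable (K) in
noncomputable def edgeIdeal (E : Set (Finset σ)) : Ideal (MvPolynomial σ K) :=
  Ideal.span ((fun A => ∏ i ∈ A, X i) '' E)

variable (K) in
noncomputable def varIdeal (C : Finset σ) : Ideal (MvPolynomial σ K) :=
  Ideal.span (X '' C)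

theorem prod_X_eq_monomial [DecidableEq σ] (A : Finset σ) :
    ∏ i ∈ A, (X i : MvPolynomial σ K) = monomial (∑ i ∈ A, Finsupp.single i 1) 1 := by
  rw [monomial_sum_one]
  rfl

theorem X_mem_varIdeal_iff [Nontrivial K] {C : Finset σ} {i : σ} :
    (X i : MvPolynomial σ K) ∈ varIdeal K C ↔ i ∈ C := by
  classical
  simp [varIdeal, mem_ideal_span_X_image, support_X, Finsupp.single_apply]

theorem varIdeal_le_varIdeal_iff [Nontrivial K] {C D : Finset σ} :
    varIdeal K C ≤ varIdeal K D ↔ C ⊆ D := by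
  refine ⟨fun h i hi => X_mem_varIdeal_iff.1 (h (X_mem_varIdeal_iff.2 hi)), fun h => ?_⟩
  exact Ideal.span_mono (Set.image_mono (Finset.coe_subset.2 h))

theorem edgeIdeal_insert (S : Finset σ) (E : Set (Finset σ)) :
    edgeIdeal K (insert S E) = edgeIdeal K E ⊔ Ideal.span {∏ i ∈ S, X i} := by
  rw [edgeIdeal, Set.image_insert_eq, Ideal.span_insert, sup_comm, edgeIdeal]

theorem edgeIdeal_le_varIdeal {E : Set (Finset σ)} {C : Finset σ} (hC : IsVertexCover E C) :
    edgeIdeal K E ≤ varIdeal K C := by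
  classical
  rw [edgeIdeal, Ideal.span_le]
  rintro _ ⟨A, hA, rfl⟩
  obtain ⟨i, hiA, hiC⟩ := hC A hA
  dsimp only
  rw [SetLike.mem_coe, ← Finset.mul_prod_erase _ _ hiA]
  exact Ideal.mul_mem_right _ _ (Ideal.subset_span ⟨i, hiC, rfl⟩)

theorem mem_edgeIdeal_iff_forall_isVertexCover [Fintype σ] {E : Set (Finset σ)}
    {f : MvPolynomial σ K} : f ∈ edgeIdeal K E ↔ ∀ C, IsVertexCover E C → f ∈ varIdeal K C := by
  classical
  refine ⟨fun hf C hC => edgeIdeal_le_varIdeal hC hf, fun hf => ?_⟩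
  have hE : edgeIdeal K E = Ideal.span ((fun e => monomial e (1 : K)) ''
      ((fun A => ∑ i ∈ A, Finsupp.single i 1) '' E)) := by
    simp only [edgeIdeal, Set.image_image, prod_X_eq_monomial]
  rw [hE, mem_ideal_span_monomial_image]
  intro m hm
  by_contra! hnone
  have hcover : IsVertexCover E {i | m i = 0} := by
    intro A hA
    simpa [Finsupp.sum_single_one_le_iff] using hnone _ ⟨A, hA, rfl⟩
  obtain ⟨i, hi, hmi⟩ := (mem_ideal_span_X_image.1 (hf _ hcover)) m hm
  exact hmi (by simpa using hi)

theorem card_inter_le_one_of_prod_X_notMem_varIdeal_sq [DecidableEq σ] {C S : Finset σ}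
    (h : ∏ i ∈ S, (X i : MvPolynomial σ K) ∉ varIdeal K C ^ 2) : (C ∩ S).card ≤ 1 := by
  by_contra! hcard
  obtain ⟨a, ha, b, hb, hab⟩ := Finset.one_lt_card.1 hcard
  rw [Finset.mem_inter] at ha hb
  obtain ⟨r, hr⟩ : X a * X b ∣ ∏ i ∈ S, (X i : MvPolynomial σ K) := by
    rw [← Finset.prod_pair hab]
    exact Finset.prod_dvd_prod_of_subset _ _ _ (Finset.insert_subset ha.2 (by simpa using hb.2))
  refine h (hr ▸ Ideal.mul_mem_right _ _ ?_)
  rw [pow_two]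
  exact Ideal.mul_mem_mul (Ideal.subset_span ⟨a, ha.1, rfl⟩) (Ideal.subset_span ⟨b, hb.1, rfl⟩)

theorem exists_monomial_eq_prod_X_pow_mul [DecidableEq σ] {S : Finset σ} {d : σ →₀ ℕ} {b : ℕ}
    (hb : ∀ i ∈ S, b ≤ d i) :
    ∃ e : σ →₀ ℕ, monomial d (1 : K) = (∏ i ∈ S, X i) ^ b * monomial e 1 ∧
      ∀ C : Finset σ, ∑ i ∈ C, d i = b * (C ∩ S).card + ∑ i ∈ C, e i := by
  set χ : σ →₀ ℕ := ∑ i ∈ S, Finsupp.single i 1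
  have hχ : ∀ i, χ i = if i ∈ S then 1 else 0 := fun i => by
    simp [χ, Finset.sum_apply', Finsupp.single_apply]
  have hsplit : b • χ + (d - b • χ) = d := add_tsub_cancel_of_le fun i => by
    by_cases hi : i ∈ S <;> simp [hχ, hi, hb]
  refine ⟨d - b • χ, ?_, fun C => ?_⟩
  · rw [prod_X_eq_monomial, monomial_pow, one_pow, monomial_mul, one_mul, hsplit]
  · conv_lhs => rw [← hsplit]
    simp only [Finsupp.add_apply, Finset.sum_add_distrib, Finsupp.smul_apply, hχ, smul_eq_mul,
      mul_ite, mul_one, mul_zero, Finset.sum_ite_mem, Finset.sum_const]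
    ring

end CommSemiring

section CommRing

variable [CommRing K]

noncomputable def killVars [DecidableEq σ] (C : Finset σ) :
    MvPolynomial σ K →ₐ[K] MvPolynomial σ K :=
  aeval fun i => if i ∈ C then 0 else X i

theorem sub_killVars_mem_varIdeal [DecidableEq σ] (C : Finset σ) (f : MvPolynomial σ K) :
    f - killVars C f ∈ varIdeal K C := by
  induction f using MvPolynomial.induction_on with
  | C a => simp [killVars]
  | add p q hp hq => simpa [add_sub_add_comm] using add_mem hp hq
  | mul_X p i hp =>
    by_cases hi : i ∈ C
    · have hXi : (X i : MvPolynomial σ K) ∈ varIdeal K C := Ideal.subset_span ⟨i, hi, rfl⟩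
      simpa [killVars, hi] using Ideal.mul_mem_left _ p hXi
    · simpa [killVars, hi, sub_mul] using Ideal.mul_mem_right (X i) _ hp

theorem ker_killVars [DecidableEq σ] (C : Finset σ) :
    RingHom.ker (killVars (K := K) C) = varIdeal K C := by
  refine le_antisymm (fun f hf => ?_) ?_
  · simpa [RingHom.mem_ker.1 hf] using sub_killVars_mem_varIdeal C f
  · rw [varIdeal, Ideal.span_le]
    rintro _ ⟨i, hi, rfl⟩
    simp [killVars, Finset.mem_coe.1 hi]

theorem varIdeal_isPrime [IsDomain K] (C : Finset σ) : (varIdeal K C).IsPrime := by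
  classical
  rw [← ker_killVars]
  exact RingHom.ker_isPrime _

theorem le_sum_of_monomial_mem_varIdeal_pow [IsDomain K] [Fintype σ] {C : Finset σ}
    {d : σ →₀ ℕ} {t : ℕ} (h : monomial d (1 : K) ∈ varIdeal K C ^ t) : t ≤ ∑ i ∈ C, d i := by
  classical
  let φ : MvPolynomial σ K →ₐ[K] Polynomial K := aeval fun i => if i ∈ C then .X else 1
  have hφC : (varIdeal K C).map φ ≤ Ideal.span {Polynomial.X} := by
    rw [varIdeal, Ideal.map_span, Ideal.span_le]
    rintro _ ⟨_, ⟨i, hi, rfl⟩, rfl⟩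
    simp [φ, Finset.mem_coe.1 hi]
  have hφd : φ (monomial d 1) = Polynomial.X ^ ∑ i ∈ C, d i := by
    simp [φ, aeval_monomial, Finsupp.prod_fintype, ite_pow, Finset.prod_ite_mem,
      Finset.prod_pow_eq_pow_sum]
  have hmem := Ideal.map_pow φ (varIdeal K C) t ▸ Ideal.mem_map_of_mem φ h
  rw [hφd] at hmem
  have := Ideal.pow_right_mono hφC t hmem
  rwa [Ideal.span_singleton_pow, Ideal.mem_span_singleton,
    pow_dvd_pow_iff Polynomial.X_ne_zero Polynomial.not_isUnit_X] at this

variable {E : Set (Finset σ)} {C : Finset σ}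

theorem le_sum_of_monomial_pow_mem_edgeIdeal_pow [IsDomain K] [Fintype σ]
    (hC : IsVertexCover E C) {d : σ →₀ ℕ} {s k : ℕ} (hk : 0 < k)
    (h : monomial d (1 : K) ^ k ∈ edgeIdeal K E ^ (s * k)) : s ≤ ∑ i ∈ C, d i := by
  rw [monomial_pow, one_pow] at h
  have := le_sum_of_monomial_mem_varIdeal_pow
    (Ideal.pow_right_mono (edgeIdeal_le_varIdeal hC) _ h)
  simp only [Finsupp.smul_apply, smul_eq_mul, ← Finset.mul_sum] at this
  rw [mul_comm s] at this
  exact Nat.le_of_mul_le_mul_left this hk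

theorem varIdeal_mem_minimalPrimes [IsDomain K] (hC : Minimal (IsVertexCover E) C) :
    varIdeal K C ∈ (edgeIdeal K E).minimalPrimes := by
  classical
  refine ⟨⟨varIdeal_isPrime C, edgeIdeal_le_varIdeal hC.1⟩, fun q ⟨hq, hEq⟩ hqC => ?_⟩
  have hcover : IsVertexCover E {i ∈ C | X i ∈ q} := by
    intro A hA
    have hprod : ∏ i ∈ A, (X i : MvPolynomial σ K) ∈ q := hEq (Ideal.subset_span ⟨A, hA, rfl⟩)
    obtain ⟨i, hiA, hiq⟩ := hq.prod_mem_iff.1 hprod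
    exact ⟨i, hiA, Finset.mem_filter.2 ⟨X_mem_varIdeal_iff.1 (hqC hiq), hiq⟩⟩
  have hsub := hC.2 hcover (Finset.filter_subset _ _)
  rw [varIdeal, Ideal.span_le]
  rintro _ ⟨i, hi, rfl⟩
  exact (Finset.mem_filter.1 (hsub hi)).2

theorem exists_minimal_isVertexCover_of_mem_associatedPrimes [IsDomain K] [IsNoetherianRing K]
    [Fintype σ] {q : Ideal (MvPolynomial σ K)}
    (hq : q ∈ associatedPrimes (MvPolynomial σ K) (MvPolynomial σ K ⧸ edgeIdeal K E)) :
    ∃ C, Minimal (IsVertexCover E) C ∧ q = varIdeal K C := by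
  classical
  obtain ⟨hqprime, x, hx⟩ := isAssociatedPrime_iff.1 hq
  obtain ⟨u, rfl⟩ := Submodule.Quotient.mk_surjective _ x
  have hmem : ∀ r, r ∈ q ↔ r * u ∈ edgeIdeal K E := fun r => by
    rw [hx, Submodule.mem_colon_singleton, Submodule.mem_bot, ← Submodule.Quotient.mk_smul,
      smul_eq_mul, Submodule.Quotient.mk_eq_zero]
  let T := Finset.univ.filter fun C => IsVertexCover E C ∧ u ∉ varIdeal K C
  have hqT : q = T.inf (varIdeal K) := by
    ext r
    simp only [hmem, mem_edgeIdeal_iff_forall_isVertexCover, Submodule.mem_finsetInf, T,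
      Finset.mem_filter, Finset.mem_univ, true_and, and_imp]
    refine ⟨fun h C hC hu => ((varIdeal_isPrime C).mem_or_mem (h C hC)).resolve_right hu,
      fun h C hC => ?_⟩
    by_cases hu : u ∈ varIdeal K C
    · exact Ideal.mul_mem_left _ _ hu
    · exact Ideal.mul_mem_right _ _ (h C hC hu)
  obtain ⟨C, hCT, hCq⟩ := hqprime.inf_le'.1 hqT.ge
  have hq_le : ∀ D ∈ T, q ≤ varIdeal K D := fun D hD => hqT.le.trans (Finset.inf_le hD)
  obtain ⟨-, hCcover, hCu⟩ := Finset.mem_filter.1 hCT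
  refine ⟨C, ⟨hCcover, fun D hD hDC => ?_⟩, le_antisymm (hq_le C hCT) hCq⟩
  have hDT : D ∈ T := Finset.mem_filter.2
    ⟨Finset.mem_univ _, hD, fun hu => hCu (varIdeal_le_varIdeal_iff.2 hDC hu)⟩
  exact varIdeal_le_varIdeal_iff.1 (hCq.trans (hq_le D hDT))

theorem exists_notMem_varIdeal_mul_monomial_mem_pow [IsDomain K] [Fintype σ]
    (hC : Minimal (IsVertexCover E) C) {e : σ →₀ ℕ} {t : ℕ} (ht : t ≤ ∑ i ∈ C, e i) :
    ∃ g ∉ varIdeal K C, g * monomial e 1 ∈ edgeIdeal K E ^ t := by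
  classical
  choose! A hAE hAC using fun i (hi : i ∈ C) => hC.exists_edge_inter_eq_singleton hi
  have hiA : ∀ i ∈ C, i ∈ A i := fun i hi =>
    Finset.mem_of_mem_inter_left ((hAC i hi).symm ▸ Finset.mem_singleton_self i)
  let g : MvPolynomial σ K := ∏ i ∈ C, (∏ j ∈ (A i).erase i, X j) ^ e i
  have hg : g ∉ varIdeal K C := by
    have hP := varIdeal_isPrime (K := K) C
    simp only [g, hP.prod_mem_iff, not_exists, not_and]
    intro i hi hmem
    obtain ⟨j, hj, hjC⟩ := hP.prod_mem_iff.1 (hP.mem_of_pow_mem _ hmem)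
    obtain ⟨hji, hjA⟩ := Finset.mem_erase.1 hj
    have := hAC i hi ▸ Finset.mem_inter.2 ⟨hjA, X_mem_varIdeal_iff.1 hjC⟩
    exact hji (Finset.mem_singleton.1 this)
  have hgX : g * ∏ i ∈ C, (X i : MvPolynomial σ K) ^ e i ∈ edgeIdeal K E ^ t := by
    rw [← Finset.prod_mul_distrib, Finset.prod_congr rfl fun i hi => by
      rw [← mul_pow, mul_comm, Finset.mul_prod_erase _ _ (hiA i hi)]]
    refine Ideal.pow_le_pow_right ht ?_
    rw [← Finset.prod_pow_eq_pow_sum]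
    refine Ideal.prod_mem_prod fun i hi => Ideal.pow_mem_pow ?_ _
    exact Ideal.subset_span ⟨A i, hAE i hi, rfl⟩
  obtain ⟨r, hr⟩ : ∏ i ∈ C, (X i : MvPolynomial σ K) ^ e i ∣ monomial e 1 := by
    rw [monomial_eq, C_1, one_mul, Finsupp.prod_fintype _ _ fun _ => pow_zero _]
    exact Finset.prod_dvd_prod_of_subset _ _ _ (Finset.subset_univ C)
  exact ⟨g, hg, by rw [hr, ← mul_assoc]; exact Ideal.mul_mem_right _ _ hgX⟩

theorem monomial_mem_edgeIdeal_pow_of_isNTF [IsDomain K] [IsNoetherianRing K] [Fintype σ]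
    (hE : IsNTF (edgeIdeal K E)) {e : σ →₀ ℕ} {t : ℕ}
    (h : ∀ C, Minimal (IsVertexCover E) C → t ≤ ∑ i ∈ C, e i) :
    monomial e (1 : K) ∈ edgeIdeal K E ^ t := by
  rcases Nat.eq_zero_or_pos t with rfl | ht
  · simp
  by_contra hmem
  have hx : Submodule.Quotient.mk (p := edgeIdeal K E ^ t) (monomial e (1 : K)) ≠ 0 := by
    rwa [Ne, Submodule.Quotient.mk_eq_zero]
  obtain ⟨q, hq, hcolon⟩ :=
    exists_le_isAssociatedPrime_of_isNoetherianRing (MvPolynomial σ K) _ hx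
  obtain ⟨C, hC, rfl⟩ := exists_minimal_isVertexCover_of_mem_associatedPrimes (hE t ht hq)
  obtain ⟨g, hg, hgmem⟩ := exists_notMem_varIdeal_mul_monomial_mem_pow (K := K) hC (h C hC)
  refine hg (hcolon ?_)
  rwa [Submodule.mem_colon_singleton, Submodule.mem_bot, ← Submodule.Quotient.mk_smul,
    smul_eq_mul, Submodule.Quotient.mk_eq_zero]

theorem monomial_mem_edgeIdeal_insert_pow [IsDomain K] [IsNoetherianRing K] [Fintype σ]
    [DecidableEq σ] {S : Finset σ} (hE : IsNTF (edgeIdeal K E))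
    (hS : ∀ p ∈ (edgeIdeal K (insert S E)).minimalPrimes, ∏ i ∈ S, X i ∉ p ^ 2)
    {d : σ →₀ ℕ} {s : ℕ} (hd : ∀ C, IsVertexCover (insert S E) C → s ≤ ∑ i ∈ C, d i) :
    monomial d (1 : K) ∈ edgeIdeal K (insert S E) ^ s := by
  set L := edgeIdeal K (insert S E)
  have hv : (∏ i ∈ S, X i : MvPolynomial σ K) ∈ L := Ideal.subset_span ⟨S, Set.mem_insert _ _, rfl⟩
  rcases S.eq_empty_or_nonempty with rfl | hSne
  · rw [(Ideal.eq_top_iff_one _).2 hv, Ideal.top_pow]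
    exact Submodule.mem_top
  obtain ⟨w, hwS, hwmin⟩ := S.exists_min_image d hSne
  obtain ⟨e, hde, hsum⟩ := exists_monomial_eq_prod_X_pow_mul (K := K) hwmin
  have he : monomial e (1 : K) ∈ edgeIdeal K E ^ (s - d w) := by
    refine monomial_mem_edgeIdeal_pow_of_isNTF hE fun C hC => ?_
    rcases (C ∩ S).eq_empty_or_nonempty with hCS | hCS
    · have hw : w ∉ C := fun hwC => by simpa [hCS] using Finset.mem_inter.2 ⟨hwC, hwS⟩
      have hcover : IsVertexCover (insert S E) (insert w C) := by
        rintro A (rfl | hA)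
        · exact ⟨w, hwS, Finset.mem_insert_self _ _⟩
        · exact hC.1.mono (Finset.subset_insert _ _) A hA
      have := hd _ hcover
      rw [Finset.sum_insert hw, hsum, hCS, Finset.card_empty, mul_zero, zero_add] at this
      omega
    · have hmin := hC.isVertexCover_insert hCS
      have hcard := card_inter_le_one_of_prod_X_notMem_varIdeal_sq
        (hS _ (varIdeal_mem_minimalPrimes hmin))
      have := hd C hmin.1
      rw [hsum, show (C ∩ S).card = 1 by have := hCS.card_pos; omega, mul_one] at this
      omega
  have hEL : edgeIdeal K E ≤ L := Ideal.span_mono (Set.image_mono (Set.subset_insert _ _))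
  rw [hde]
  refine Ideal.pow_le_pow_right (show s ≤ d w + (s - d w) by omega) ?_
  rw [pow_add]
  exact Ideal.mul_mem_mul (Ideal.pow_mem_pow hv _) (Ideal.pow_right_mono hEL _ he)

end CommRing

end MvPolynomial

/- `u_j = ∏_{i ∈ U j} x_i` for `j = 0, …, m`, so `u_m` is the last generator `U (Fin.last m)`;
`S = K[x_1,…,x_{n+m+1}]` adds one variable per generator, `f = ∏_{i ∈ F} x_i`, and
`L = (u_0, …, u_{m-1})S + f·x_{n+1}⋯x_{n+m+1}·S`. -/
theorem stmt_13_general {K : Type*} [Field K] {n m : ℕ}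
    (U : Fin (m + 1) → Finset (Fin n))
    (F : Finset (Fin n))
    (J : Ideal (MvPolynomial (Fin (n + (m + 1))) K))
    (hJ : J = Ideal.span {f : MvPolynomial (Fin (n + (m + 1))) K |
      ∃ j : Fin (m + 1), j ≠ Fin.last m ∧ f = ∏ i ∈ U j, X (Fin.castAdd (m + 1) i)})
    (v : MvPolynomial (Fin (n + (m + 1))) K)
    (hv : v = (∏ i ∈ F, X (Fin.castAdd (m + 1) i)) * ∏ j : Fin (m + 1), X (Fin.natAdd n j))
    (L : Ideal (MvPolynomial (Fin (n + (m + 1))) K))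
    (hL : L = J + Ideal.span {v})
    (hvp : ∀ p ∈ L.minimalPrimes, v ∉ p ^ 2)
    (hJNTF : IsNTF J) :
    (∀ s : ℕ, 1 ≤ s → ∀ d : Fin (n + (m + 1)) →₀ ℕ,
      (∃ k : ℕ, 1 ≤ k ∧ (monomial d (1 : K)) ^ k ∈ L ^ (s * k)) →
      monomial d (1 : K) ∈ L ^ s) := by
  rintro s - d ⟨k, hk, hdk⟩
  let E := (fun j => (U j).map (Fin.castAddEmb (m + 1))) '' {j | j ≠ Fin.last m}
  let S := F.map (Fin.castAddEmb (m + 1)) ∪ Finset.univ.map (Fin.natAddEmb n)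
  have hJE : J = edgeIdeal K E := by
    rw [hJ, edgeIdeal, Set.image_image]
    congr 1
    ext f
    simp [Finset.prod_map, eq_comm]
  have hvS : v = ∏ i ∈ S, X i := by
    rw [hv, Finset.prod_union, Finset.prod_map, Finset.prod_map]
    · rfl
    · simp [Finset.disjoint_left, Fin.ext_iff]
      omega
  have hLE : L = edgeIdeal K (insert S E) := by
    rw [hL, edgeIdeal_insert, hJE, hvS]
    rfl
  rw [hLE] at hdk hvp ⊢
  rw [hvS] at hvp
  exact monomial_mem_edgeIdeal_insert_pow (hJE ▸ hJNTF) hvp fun C hC =>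
    le_sum_of_monomial_pow_mem_edgeIdeal_pow hC hk hdk

theorem stmt_13 {K : Type*} [Field K] {n m : ℕ}
    (U : Fin (m + 1) → Finset (Fin n))
    (hU : ∀ j k : Fin (m + 1), j ≠ k → ¬ U j ⊆ U k)
    (hNTF : IsNTF (Ideal.span
      (Set.range fun j : Fin (m + 1) => ∏ i ∈ U j, (X i : MvPolynomial (Fin n) K))))
    (F : Finset (Fin n)) (hF : F ⊆ U (Fin.last m))
    (J : Ideal (MvPolynomial (Fin (n + (m + 1))) K))
    (hJ : J = Ideal.span {f : MvPolynomial (Fin (n + (m + 1))) K |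
      ∃ j : Fin (m + 1), j ≠ Fin.last m ∧ f = ∏ i ∈ U j, X (Fin.castAdd (m + 1) i)})
    (v : MvPolynomial (Fin (n + (m + 1))) K)
    (hv : v = (∏ i ∈ F, X (Fin.castAdd (m + 1) i)) * ∏ j : Fin (m + 1), X (Fin.natAdd n j))
    (L : Ideal (MvPolynomial (Fin (n + (m + 1))) K))
    (hL : L = J + Ideal.span {v})
    (hvp : ∀ p ∈ L.minimalPrimes, v ∉ p ^ 2)
    (hJNTF : IsNTF J) :
    (∀ s : ℕ, 1 ≤ s → ∀ d : Fin (n + (m + 1)) →₀ ℕ,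
      (∃ k : ℕ, 1 ≤ k ∧ (monomial d (1 : K)) ^ k ∈ L ^ (s * k)) →
      monomial d (1 : K) ∈ L ^ s) :=
  stmt_13_general U F J hJ v hv L hL hvp hJNTF
end
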